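/- arXiv:1907.12846 — 6 statements merged into one kernel-verified Lean document; each statement's English description precedes it below -/
import Mathlib

section
/- Let n₁, n₂ be positive integers, n = n₁ + n₂, r an integer, and A(t) = t^r · Σ_{i≥0} A_i t^i ∈ M(n, ℂ((t))) with A_i ∈ M(n, ℂ). Suppose A_0 = diag(A_0^{11}, A_0^{22}) is block diagonal with A_0^{jj} ∈ M(n_j, ℂ) for j = 1, 2, and the sets of eigenvalues of A_0^{11} and of A_0^{22} are disjoint. Then there exist T_{12} ∈ M(n₁×n₂, ℂ[[t]]) and T_{21} ∈ M(n₂×n₁, ℂ[[t]]), both with zero constant term, such that the block matrix T(t) with diagonal blocks I_{n₁}, I_{n₂} and off-diagonal blocks T_{12}(t), T_{21}(t) is invertible over ℂ[[t]] and T(t) A(t) T(t)⁻¹ = diag(B_{11}(t), B_{22}(t)) is block diagonal, where B_{jj}(t) = t^r · Σ_{i≥0} B_i^{jj} t^i ∈ M(n_j, ℂ((t))) and B_0^{jj} = A_0^{jj} for j = 1, 2. -/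
/-!
Write `A = t^r Â` with `Â` a matrix over `ℂ[[t]]` whose constant term is `diag(A₀¹¹, A₀²²)`.
Conjugation by `T = (1, T₁₂; T₂₁, 1)` makes `T Â` equal to `diag(C₁₁, C₂₂) T` as soon as
`T₁₂` solves the matrix Riccati equation `b₁₂ + T₁₂ b₂₂ = (b₁₁ + T₁₂ b₂₁) T₁₂` (and `T₂₁` its
mirror image), with `C₁₁ = b₁₁ + T₁₂ b₂₁`, `C₂₂ = b₂₂ + T₂₁ b₁₂`. Comparing coefficients of `t^d`,
the `d`-th coefficient of `T₁₂` enters only through the Sylvester operator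
`Y ↦ A₀¹¹ Y - Y A₀²²`, every other term involving lower coefficients; this operator is bijective
because the spectra of `A₀¹¹` and `A₀²²` are disjoint, so the equation is solved degree by degree.
-/

section Sylvester

open Polynomial

namespace Matrix

variable {K : Type*} [Field K] {m n : Type*} [Fintype m] [Fintype n] [DecidableEq m]
  [DecidableEq n]

theorem aeval_mul_eq_mul_aeval {A : Matrix m m K} {B : Matrix n n K} {Y : Matrix m n K}
    (h : A * Y = Y * B) (p : K[X]) : aeval A p * Y = Y * aeval B p := by
  induction p using Polynomial.induction_on' with
  | add p q hp hq => simp only [map_add, Matrix.add_mul, Matrix.mul_add, hp, hq]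
  | monomial k c =>
    have hpow : A ^ k * Y = Y * B ^ k := by
      induction k with
      | zero => simp
      | succ k ih => rw [pow_succ, pow_succ, Matrix.mul_assoc, h, ← Matrix.mul_assoc, ih,
          Matrix.mul_assoc]
    simp only [aeval_monomial, Algebra.algebraMap_eq_smul_one, smul_mul_assoc, one_mul,
      Matrix.smul_mul, Matrix.mul_smul, hpow]

theorem isUnit_aeval_charpoly_of_disjoint [IsAlgClosed K] {A : Matrix m m K} {B : Matrix n n K}
    (h : Disjoint (spectrum K A) (spectrum K B)) : IsUnit (aeval A B.charpoly) := by
  nontriviality Matrix m m K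
  rw [← spectrum.zero_notMem_iff K, spectrum.map_polynomial_aeval_of_nonempty A _
    (spectrum.nonempty_of_isAlgClosed_of_finiteDimensional K A)]
  rintro ⟨μ, hμA, hμB⟩
  exact h.ne_of_mem hμA (mem_spectrum_iff_isRoot_charpoly.mpr hμB) rfl

theorem sylvester_bijective [IsAlgClosed K] {A : Matrix m m K} {B : Matrix n n K}
    (h : Disjoint (spectrum K A) (spectrum K B)) :
    Function.Bijective fun Y : Matrix m n K => A * Y - Y * B := by
  let L := mulLeftLinearMap n K A - mulRightLinearMap m K B
  have hinj : Function.Injective L := by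
    refine (injective_iff_map_eq_zero L).mpr fun Y hY => ?_
    have hAY : A * Y = Y * B := sub_eq_zero.mp hY
    have hcharpoly : aeval A B.charpoly * Y = 0 := by
      rw [aeval_mul_eq_mul_aeval hAY, aeval_self_charpoly, Matrix.mul_zero]
    simpa [← Matrix.mul_assoc, Matrix.nonsing_inv_mul _
      ((isUnit_iff_isUnit_det _).mp (isUnit_aeval_charpoly_of_disjoint h))]
      using congrArg ((aeval A B.charpoly)⁻¹ * ·) hcharpoly
  exact ⟨hinj, LinearMap.injective_iff_surjective.mp hinj⟩

end Matrix

end Sylvester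

theorem exists_forall_eq_zero_of_triangular {α β : Type*} [Nonempty α] [Zero β]
    (F : (ℕ → α) → ℕ → β)
    (hloc : ∀ d x y, (∀ k ≤ d, x k = y k) → F x d = F y d)
    (hsolve : ∀ d x, ∃ a, F (Function.update x d a) d = 0) :
    ∃ x, ∀ d, F x d = 0 := by
  choose g hg using hsolve
  let lower (d : ℕ) (prev : ∀ k < d, α) : ℕ → α :=
    fun k => if h : k < d then prev k h else Classical.arbitrary α
  let x : ℕ → α := Nat.strongRec fun d prev => g d (lower d prev)
  refine ⟨x, fun d => ?_⟩
  rw [← hg d (lower d fun k _ => x k)]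
  refine hloc d _ _ fun k hk => ?_
  rcases hk.lt_or_eq with hk | rfl
  · simp [Function.update_of_ne hk.ne, lower, hk]
  · rw [Function.update_self]
    exact Nat.strongRec_eq _ k

open PowerSeries

namespace Matrix

variable {m n : Type*}

section Riccati

variable [Fintype m] [Fintype n] {S : Type*} [CommRing S]
  (b₁₁ : Matrix m m S) (b₁₂ : Matrix m n S) (b₂₁ : Matrix n m S) (b₂₂ : Matrix n n S)

def riccati (T : Matrix m n S) : Matrix m n S :=
  b₁₂ + T * b₂₂ - (b₁₁ + T * b₂₁) * T

theorem riccati_add_smul (V W : Matrix m n S) (c : S) :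
    riccati b₁₁ b₁₂ b₂₁ b₂₂ (V + c • W) = riccati b₁₁ b₁₂ b₂₁ b₂₂ V +
      c • (W * b₂₂ - b₁₁ * W - W * b₂₁ * (V + c • W) - V * b₂₁ * W) := by
  simp only [riccati, Matrix.add_mul, Matrix.mul_add, Matrix.smul_mul, Matrix.mul_smul,
    smul_sub, smul_add, Matrix.mul_assoc]
  abel

theorem map_riccati {S' : Type*} [CommRing S'] (f : S →+* S') (T : Matrix m n S) :
    (riccati b₁₁ b₁₂ b₂₁ b₂₂ T).map f =
      riccati (b₁₁.map f) (b₁₂.map f) (b₂₁.map f) (b₂₂.map f) (T.map f) := by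
  simp [riccati, Matrix.map_sub _ (map_sub f), Matrix.map_add _ (map_add f)]

end Riccati

theorem fromBlocks_one_mul_eq_of_riccati_eq_zero [Fintype m] [Fintype n] [DecidableEq m]
    [DecidableEq n] {S : Type*} [CommRing S] {b₁₁ : Matrix m m S} {b₁₂ : Matrix m n S}
    {b₂₁ : Matrix n m S} {b₂₂ : Matrix n n S} {T₁₂ : Matrix m n S} {T₂₁ : Matrix n m S}
    (h₁₂ : riccati b₁₁ b₁₂ b₂₁ b₂₂ T₁₂ = 0) (h₂₁ : riccati b₂₂ b₂₁ b₁₂ b₁₁ T₂₁ = 0) :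
    fromBlocks 1 T₁₂ T₂₁ 1 * fromBlocks b₁₁ b₁₂ b₂₁ b₂₂ =
      fromBlocks (b₁₁ + T₁₂ * b₂₁) 0 0 (b₂₂ + T₂₁ * b₁₂) * fromBlocks 1 T₁₂ T₂₁ 1 := by
  rw [riccati, sub_eq_zero] at h₁₂ h₂₁
  simp only [fromBlocks_multiply, Matrix.one_mul, Matrix.mul_one, Matrix.zero_mul, add_zero,
    zero_add, h₁₂, add_comm _ b₂₁, h₂₁, add_comm _ b₂₂]

theorem map_mul_smul_eq_smul_mul_map_of_mul_eq [Fintype n] {R S : Type*} [CommRing R]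
    [CommRing S] (f : R →+* S) {T A D : Matrix n n R} (h : T * A = D * T) (c : S) :
    T.map f * (c • A.map f) = (c • D.map f) * T.map f := by
  rw [Matrix.mul_smul, Matrix.smul_mul, ← Matrix.map_mul, h, Matrix.map_mul]

section PowerSeries

variable {R : Type*} [CommRing R]

theorem map_coeff_X_pow_smul_of_lt {e k : ℕ} (h : k < e) (M : Matrix m n R⟦X⟧) :
    ((X ^ e : R⟦X⟧) • M).map (coeff k) = 0 := by
  ext i j
  simp [coeff_X_pow_mul', h.not_ge]

theorem map_coeff_X_pow_smul_self (e : ℕ) (M : Matrix m n R⟦X⟧) :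
    ((X ^ e : R⟦X⟧) • M).map (coeff e) = M.map constantCoeff := by
  ext i j
  simp [coeff_X_pow_mul']

def ofCoeffs (x : ℕ → Matrix m n R) : Matrix m n R⟦X⟧ :=
  of fun i j => mk fun k => x k i j

theorem ofCoeffs_eq_add_X_pow_smul {e : ℕ} {x y : ℕ → Matrix m n R} (h : ∀ k < e, x k = y k) :
    ∃ W, ofCoeffs x = ofCoeffs y + (X ^ e : R⟦X⟧) • W ∧ W.map constantCoeff = x e - y e := by
  refine ⟨ofCoeffs fun k => x (k + e) - y (k + e), ?_, ?_⟩
  · ext i j k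
    rcases lt_or_ge k e with hk | hk
    · simp [ofCoeffs, coeff_X_pow_mul', hk.not_ge, h k hk]
    · simp [ofCoeffs, coeff_X_pow_mul', hk, Nat.sub_add_cancel hk]
  · ext i j
    simp [ofCoeffs]

theorem exists_riccati_eq_zero [Fintype m] [Fintype n]
    (b₁₁ : Matrix m m R⟦X⟧) (b₁₂ : Matrix m n R⟦X⟧) (b₂₁ : Matrix n m R⟦X⟧) (b₂₂ : Matrix n n R⟦X⟧)
    (h₁₂ : b₁₂.map constantCoeff = 0)
    (hsyl : Function.Surjective fun Y : Matrix m n R =>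
      b₁₁.map constantCoeff * Y - Y * b₂₂.map constantCoeff) :
    ∃ T : Matrix m n R⟦X⟧, T.map constantCoeff = 0 ∧ riccati b₁₁ b₁₂ b₂₁ b₂₂ T = 0 := by
  -- `X • ofCoeffs x` has no constant term, and coefficient `d + 1` of its residual depends only
  -- on `x 0, …, x d`, on `x d` through the Sylvester operator.
  let F (x : ℕ → Matrix m n R) (d : ℕ) : Matrix m n R :=
    (riccati b₁₁ b₁₂ b₂₁ b₂₂ ((X : R⟦X⟧) • ofCoeffs x)).map (coeff (d + 1))
  have hconst (x : ℕ → Matrix m n R) : ((X : R⟦X⟧) • ofCoeffs x).map constantCoeff = 0 := by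
    ext i j; simp
  have hloc (d : ℕ) (x y : ℕ → Matrix m n R) (hxy : ∀ k ≤ d, x k = y k) : F x d = F y d := by
    obtain ⟨W, hW, -⟩ := ofCoeffs_eq_add_X_pow_smul fun k hk => hxy k (Nat.le_of_lt_succ hk)
    simp only [F, hW, smul_add, smul_smul, ← pow_succ', riccati_add_smul]
    rw [Matrix.map_add _ (map_add _), map_coeff_X_pow_smul_of_lt (by omega), add_zero]
  have hsolve (d : ℕ) (x : ℕ → Matrix m n R) : ∃ a, F (Function.update x d a) d = 0 := by
    obtain ⟨a, ha⟩ := hsyl (F (Function.update x d 0) d)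
    obtain ⟨W, hW, hW0⟩ := ofCoeffs_eq_add_X_pow_smul (e := d) (x := Function.update x d a)
      (y := Function.update x d 0) fun k hk => by simp [hk.ne]
    simp only [Function.update_self, sub_zero] at hW0
    refine ⟨a, ?_⟩
    have hU0 := hconst (Function.update x d a)
    simp only [F, hW, smul_add, smul_smul, ← pow_succ', riccati_add_smul] at hU0 ⊢
    rw [Matrix.map_add _ (map_add _), map_coeff_X_pow_smul_self]
    simp only [Matrix.map_sub _ (map_sub _), Matrix.map_mul, hU0, hconst, hW0, Matrix.mul_zero,
      Matrix.zero_mul, sub_zero]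
    dsimp only [F] at ha
    rw [← ha]
    abel
  obtain ⟨x, hx⟩ := exists_forall_eq_zero_of_triangular F hloc hsolve
  refine ⟨(X : R⟦X⟧) • ofCoeffs x, hconst x, ?_⟩
  ext i j k
  rcases k with _ | d
  · have h0 := congrFun (congrFun (map_riccati b₁₁ b₁₂ b₂₁ b₂₂ constantCoeff
      ((X : R⟦X⟧) • ofCoeffs x)) i) j
    simpa [riccati, h₁₂, hconst] using h0
  · exact congrFun (congrFun (hx d) i) j

theorem exists_fromBlocks_one_mul_eq_fromBlocks_diag_mul {K : Type*} [Field K] [IsAlgClosed K]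
    [Fintype m] [Fintype n] [DecidableEq m] [DecidableEq n]
    {b₁₁ : Matrix m m K⟦X⟧} {b₁₂ : Matrix m n K⟦X⟧} {b₂₁ : Matrix n m K⟦X⟧} {b₂₂ : Matrix n n K⟦X⟧}
    (h₁₂ : b₁₂.map constantCoeff = 0) (h₂₁ : b₂₁.map constantCoeff = 0)
    (hdisj : Disjoint (spectrum K (b₁₁.map constantCoeff)) (spectrum K (b₂₂.map constantCoeff))) :
    ∃ (T₁₂ : Matrix m n K⟦X⟧) (T₂₁ : Matrix n m K⟦X⟧) (C₁₁ : Matrix m m K⟦X⟧)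
      (C₂₂ : Matrix n n K⟦X⟧), T₁₂.map constantCoeff = 0 ∧ T₂₁.map constantCoeff = 0 ∧
      C₁₁.map constantCoeff = b₁₁.map constantCoeff ∧
      C₂₂.map constantCoeff = b₂₂.map constantCoeff ∧
      fromBlocks 1 T₁₂ T₂₁ 1 * fromBlocks b₁₁ b₁₂ b₂₁ b₂₂ =
        fromBlocks C₁₁ 0 0 C₂₂ * fromBlocks 1 T₁₂ T₂₁ 1 := by
  obtain ⟨T₁₂, hT₁₂, hR₁₂⟩ := exists_riccati_eq_zero b₁₁ b₁₂ b₂₁ b₂₂ h₁₂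
    (sylvester_bijective hdisj).2
  obtain ⟨T₂₁, hT₂₁, hR₂₁⟩ := exists_riccati_eq_zero b₂₂ b₂₁ b₁₂ b₁₁ h₂₁
    (sylvester_bijective hdisj.symm).2
  refine ⟨T₁₂, T₂₁, _, _, hT₁₂, hT₂₁, ?_, ?_, fromBlocks_one_mul_eq_of_riccati_eq_zero hR₁₂ hR₂₁⟩
  · simp [Matrix.map_add _ (map_add _), hT₁₂]
  · simp [Matrix.map_add _ (map_add _), hT₂₁]

theorem isUnit_of_isUnit_map_constantCoeff [Fintype n] [DecidableEq n] {M : Matrix n n R⟦X⟧}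
    (h : IsUnit (M.map constantCoeff)) : IsUnit M := by
  rw [isUnit_iff_isUnit_det, PowerSeries.isUnit_iff_constantCoeff, RingHom.map_det]
  exact (isUnit_iff_isUnit_det _).mp h

end PowerSeries

end Matrix

namespace HahnSeries

variable {R : Type*} [Semiring R]

theorem coeff_single_mul_ofPowerSeries (r : ℤ) (f : R⟦X⟧) (k : ℤ) :
    (single r (1 : R) * ofPowerSeries ℤ R f).coeff k =
      if k < r then 0 else PowerSeries.coeff (k - r).natAbs f := by
  obtain ⟨c, rfl⟩ : ∃ c, k = c + r := ⟨k - r, by ring⟩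
  rw [coeff_single_mul_add, one_mul, PowerSeries.coeff_coe]
  simp only [add_sub_cancel_right, add_lt_iff_neg_right]

theorem eq_single_mul_ofPowerSeries {r : ℤ} {f : LaurentSeries R} (h : ∀ k < r, f.coeff k = 0) :
    f = single r 1 * ofPowerSeries ℤ R (PowerSeries.mk fun i => f.coeff (r + i)) := by
  ext k
  rw [coeff_single_mul_ofPowerSeries]
  split_ifs with hk
  · exact h k hk
  · rw [PowerSeries.coeff_mk, Int.natAbs_of_nonneg (by omega), add_sub_cancel]

end HahnSeries

open Matrix

theorem splitting_lemma_two_blocks_general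
    (n₁ n₂ : ℕ) (r : ℤ)
    (A : Matrix (Fin n₁ ⊕ Fin n₂) (Fin n₁ ⊕ Fin n₂) (LaurentSeries ℂ))
    (hord : ∀ p q, ∀ k : ℤ, k < r → (A p q).coeff k = 0)
    (A011 : Matrix (Fin n₁) (Fin n₁) ℂ) (A022 : Matrix (Fin n₂) (Fin n₂) ℂ)
    (hblock : ∀ p q, (A p q).coeff r = Matrix.fromBlocks A011 0 0 A022 p q)
    (hdisj : Disjoint (spectrum ℂ A011) (spectrum ℂ A022)) :
    ∃ (T12 : Matrix (Fin n₁) (Fin n₂) (PowerSeries ℂ))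
      (T21 : Matrix (Fin n₂) (Fin n₁) (PowerSeries ℂ)),
      (∀ i j, PowerSeries.constantCoeff (T12 i j) = 0) ∧
      (∀ i j, PowerSeries.constantCoeff (T21 i j) = 0) ∧
      IsUnit (Matrix.fromBlocks 1 T12 T21 1) ∧
      ∃ (B11 : Matrix (Fin n₁) (Fin n₁) (LaurentSeries ℂ))
        (B22 : Matrix (Fin n₂) (Fin n₂) (LaurentSeries ℂ)),
        (Matrix.fromBlocks 1 T12 T21 1).map (HahnSeries.ofPowerSeries ℤ ℂ) * A
          = Matrix.fromBlocks B11 0 0 B22 *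
            (Matrix.fromBlocks 1 T12 T21 1).map (HahnSeries.ofPowerSeries ℤ ℂ) ∧
        (∀ i j, ∀ k : ℤ, k < r → (B11 i j).coeff k = 0) ∧
        (∀ i j, ∀ k : ℤ, k < r → (B22 i j).coeff k = 0) ∧
        (∀ i j, (B11 i j).coeff r = A011 i j) ∧
        (∀ i j, (B22 i j).coeff r = A022 i j) := by
  set Â := A.map fun f => PowerSeries.mk fun i => f.coeff (r + i)
  have hA : A = HahnSeries.single r (1 : ℂ) • Â.map (HahnSeries.ofPowerSeries ℤ ℂ) := by
    ext1 p q
    exact HahnSeries.eq_single_mul_ofPowerSeries (hord p q)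
  have hÂ0 : Â.map constantCoeff = fromBlocks A011 0 0 A022 := by
    ext p q
    simp [Â, hblock]
  rw [← fromBlocks_toBlocks Â, fromBlocks_map, fromBlocks_inj] at hÂ0
  obtain ⟨h₁₁, h₁₂, h₂₁, h₂₂⟩ := hÂ0
  obtain ⟨T₁₂, T₂₁, C₁₁, C₂₂, hT₁₂, hT₂₁, hC₁₁, hC₂₂, hconj⟩ :=
    exists_fromBlocks_one_mul_eq_fromBlocks_diag_mul h₁₂ h₂₁ (h₁₁ ▸ h₂₂ ▸ hdisj)
  refine ⟨T₁₂, T₂₁, congr_fun₂ hT₁₂, congr_fun₂ hT₂₁,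
    isUnit_of_isUnit_map_constantCoeff (by
      simp [fromBlocks_map, hT₁₂, hT₂₁, Matrix.map_one _ (map_zero _) (map_one _)]),
    HahnSeries.single r (1 : ℂ) • C₁₁.map (HahnSeries.ofPowerSeries ℤ ℂ),
    HahnSeries.single r (1 : ℂ) • C₂₂.map (HahnSeries.ofPowerSeries ℤ ℂ), ?_, ?_, ?_, ?_, ?_⟩
  · rw [hA, ← fromBlocks_toBlocks Â, map_mul_smul_eq_smul_mul_map_of_mul_eq _ hconj]
    simp [fromBlocks_map, fromBlocks_smul]
  all_goals intro i j
  all_goals simp only [Matrix.smul_apply, Matrix.map_apply, smul_eq_mul,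
    HahnSeries.coeff_single_mul_ofPowerSeries]
  · exact fun k hk => if_pos hk
  · exact fun k hk => if_pos hk
  · simpa using congr_fun₂ (hC₁₁.trans h₁₁) i j
  · simpa using congr_fun₂ (hC₂₂.trans h₂₂) i j

/-- **Splitting lemma (two blocks).**  Let `A(t) = t^r Σ_{i≥0} A_i t^i` be an `n × n`
matrix of formal Laurent series (`n = n₁ + n₂`), whose leading coefficient
`A_0` is block diagonal with blocks `A011`, `A022` having disjoint sets of eigenvalues.
Then there are off-diagonal blocks `T12`, `T21` with entries in `ℂ[[t]]` and zero
constant term such that the block matrix `T = (I, T12; T21, I)` is invertible over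
`ℂ[[t]]` and conjugates `A` into a block diagonal matrix `diag(B11, B22)` of the same
shape `t^r Σ_{i≥0} B_i t^i`, with `B_0^{jj} = A_0^{jj}`. -/
theorem splitting_lemma_two_blocks
    (n₁ n₂ : ℕ) (hn₁ : 0 < n₁) (hn₂ : 0 < n₂) (r : ℤ)
    (A : Matrix (Fin n₁ ⊕ Fin n₂) (Fin n₁ ⊕ Fin n₂) (LaurentSeries ℂ))
    (hord : ∀ p q, ∀ k : ℤ, k < r → (A p q).coeff k = 0)
    (A011 : Matrix (Fin n₁) (Fin n₁) ℂ) (A022 : Matrix (Fin n₂) (Fin n₂) ℂ)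
    (hblock : ∀ p q, (A p q).coeff r = Matrix.fromBlocks A011 0 0 A022 p q)
    (hdisj : Disjoint (spectrum ℂ A011) (spectrum ℂ A022)) :
    ∃ (T12 : Matrix (Fin n₁) (Fin n₂) (PowerSeries ℂ))
      (T21 : Matrix (Fin n₂) (Fin n₁) (PowerSeries ℂ)),
      (∀ i j, PowerSeries.constantCoeff (T12 i j) = 0) ∧
      (∀ i j, PowerSeries.constantCoeff (T21 i j) = 0) ∧
      IsUnit (Matrix.fromBlocks 1 T12 T21 1) ∧
      ∃ (B11 : Matrix (Fin n₁) (Fin n₁) (LaurentSeries ℂ))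
        (B22 : Matrix (Fin n₂) (Fin n₂) (LaurentSeries ℂ)),
        (Matrix.fromBlocks 1 T12 T21 1).map (HahnSeries.ofPowerSeries ℤ ℂ) * A
          = Matrix.fromBlocks B11 0 0 B22 *
            (Matrix.fromBlocks 1 T12 T21 1).map (HahnSeries.ofPowerSeries ℤ ℂ) ∧
        (∀ i j, ∀ k : ℤ, k < r → (B11 i j).coeff k = 0) ∧
        (∀ i j, ∀ k : ℤ, k < r → (B22 i j).coeff k = 0) ∧
        (∀ i j, (B11 i j).coeff r = A011 i j) ∧
        (∀ i j, (B22 i j).coeff r = A022 i j) :=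
  splitting_lemma_two_blocks_general n₁ n₂ r A hord A011 A022 hblock hdisj
end

section
/- Let n = n₁ + ⋯ + n_k with positive integers n_j, let r be an integer, and let A(t) = t^r · Σ_{i≥0} A_i t^i ∈ M(n, ℂ((t))) with A_i ∈ M(n, ℂ). Suppose A_0 = diag(A_0^{11}, …, A_0^{kk}) is block diagonal with A_0^{jj} ∈ M(n_j, ℂ), and the sets of eigenvalues of the blocks A_0^{11}, …, A_0^{kk} are pairwise disjoint. Then there exists T ∈ M(n, ℂ[[t]]), invertible over ℂ[[t]] and with T ≡ I_n (mod t), such that T A T⁻¹ = diag(B_{11}(t), …, B_{kk}(t)) is block diagonal with B_{jj}(t) = t^r · Σ_{i≥0} B_i^{jj} t^i ∈ M(n_j, ℂ((t))) and B_0^{jj} = A_0^{jj} for every j = 1, …, k. -/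
/-!
Write `A = t^r (A_0 + A_1 t + ⋯)` and look for `T = 1 + T_1 t + ⋯` and `B = t^r (A_0 + B_1 t + ⋯)`
with `T A = B T`. Comparing coefficients of `t^(r+m)` gives
`B_m = T_m A_0 - A_0 T_m + D_m`, where `D_m` only involves `T_i, B_i` for `i < m`.
As `A_0 = diag(P_1, …, P_k)`, the `(j, j')` block of `T_m A_0 - A_0 T_m` is `X P_j' - P_j X`
for the `(j, j')` block `X` of `T_m`, and for `j ≠ j'` this Sylvester operator is bijective
because `P_j` and `P_j'` have no common eigenvalue. So `T_m` can be chosen degree by degree to make every `B_m` block diagonal.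
-/

open Matrix Finset PowerSeries

section Sylvester

open Polynomial

variable {𝕜 m n : Type*} [Field 𝕜] [Fintype m] [DecidableEq m] [Fintype n] [DecidableEq n]

theorem Matrix.aeval_mul_eq_mul_aeval_s1 {P : Matrix m m 𝕜} {Q : Matrix n n 𝕜} {X : Matrix m n 𝕜}
    (h : P * X = X * Q) (f : 𝕜[X]) : aeval P f * X = X * aeval Q f := by
  have hpow (d : ℕ) : P ^ d * X = X * Q ^ d := by
    induction d with
    | zero => simp
    | succ d ih => rw [pow_succ, pow_succ, Matrix.mul_assoc, h, ← Matrix.mul_assoc, ih,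
        Matrix.mul_assoc]
  simp only [aeval_eq_sum_range, Matrix.sum_mul, Matrix.mul_sum, Matrix.smul_mul,
    Matrix.mul_smul, hpow]

theorem Matrix.eq_zero_of_mul_eq_mul_of_disjoint_spectrum [IsAlgClosed 𝕜]
    {P : Matrix m m 𝕜} {Q : Matrix n n 𝕜} (hPQ : Disjoint (spectrum 𝕜 P) (spectrum 𝕜 Q))
    {X : Matrix m n 𝕜} (h : P * X = X * Q) : X = 0 := by
  rcases isEmpty_or_nonempty m with hm | hm
  · exact Subsingleton.elim _ _
  -- `χ_P(Q)` is invertible, as its eigenvalues `χ_P(μ)`, `μ ∈ σ(Q)`, are nonzero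
  have hunit : IsUnit (aeval Q P.charpoly) := by
    rw [← spectrum.zero_notMem_iff 𝕜, spectrum.map_polynomial_aeval_of_degree_pos Q _
      (natDegree_pos_iff_degree_pos.mp (by simp [Fintype.card_pos]))]
    rintro ⟨μ, hμQ, hμ⟩
    exact hPQ.ne_of_mem (mem_spectrum_iff_isRoot_charpoly.mpr hμ) hμQ rfl
  have := hunit.invertible
  have hX := aeval_mul_eq_mul_aeval_s1 h P.charpoly
  rw [aeval_self_charpoly, Matrix.zero_mul, eq_comm, ← Matrix.zero_mul (aeval Q P.charpoly)] at hX
  exact mul_left_inj_of_invertible _ |>.mp hX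

theorem Matrix.exists_mul_sub_mul_eq_of_disjoint_spectrum [IsAlgClosed 𝕜]
    {P : Matrix m m 𝕜} {Q : Matrix n n 𝕜} (hPQ : Disjoint (spectrum 𝕜 P) (spectrum 𝕜 Q))
    (C : Matrix m n 𝕜) : ∃ X : Matrix m n 𝕜, X * Q - P * X = C := by
  let S := mulRightLinearMap m 𝕜 Q - mulLeftLinearMap n 𝕜 P
  have hS : Function.Injective S := by
    rw [← LinearMap.ker_eq_bot, LinearMap.ker_eq_bot']
    exact fun X hX => eq_zero_of_mul_eq_mul_of_disjoint_spectrum hPQ (sub_eq_zero.mp hX).symm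
  exact LinearMap.injective_iff_surjective.mp hS C

end Sylvester

section Blocks

variable {κ l α : Type*} {ι : κ → Type*}

def Matrix.IsBlockDiagonal [Zero α] (M : Matrix (Σ j, ι j) (Σ j, ι j) α) : Prop :=
  ∀ p q, p.1 ≠ q.1 → M p q = 0

variable [Fintype κ] [∀ j, Fintype (ι j)]

theorem Matrix.IsBlockDiagonal.mul_apply_sigma [NonUnitalNonAssocSemiring α]
    {M : Matrix (Σ j, ι j) (Σ j, ι j) α} (hM : M.IsBlockDiagonal)
    (X : Matrix l (Σ j, ι j) α) (i : l) (j : κ) (b : ι j) :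
    (X * M) i ⟨j, b⟩ = ∑ a, X i ⟨j, a⟩ * M ⟨j, a⟩ ⟨j, b⟩ := by
  classical
  rw [mul_apply, ← univ_sigma_univ, sum_sigma, sum_eq_single j]
  · exact fun j' _ hj' => sum_eq_zero fun a _ => by rw [hM _ _ hj', mul_zero]
  · simp

theorem Matrix.IsBlockDiagonal.sigma_mul_apply [NonUnitalNonAssocSemiring α]
    {M : Matrix (Σ j, ι j) (Σ j, ι j) α} (hM : M.IsBlockDiagonal)
    (X : Matrix (Σ j, ι j) l α) (j : κ) (a : ι j) (i : l) :
    (M * X) ⟨j, a⟩ i = ∑ b, M ⟨j, a⟩ ⟨j, b⟩ * X ⟨j, b⟩ i := by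
  classical
  rw [mul_apply, ← univ_sigma_univ, sum_sigma, sum_eq_single j]
  · exact fun j' _ hj' => sum_eq_zero fun b _ => by rw [hM _ _ hj'.symm, zero_mul]
  · simp

theorem Matrix.IsBlockDiagonal.exists_isBlockDiagonal_mul_sub_mul_add {𝕜 : Type*} [Field 𝕜]
    [IsAlgClosed 𝕜] [DecidableEq κ] [∀ j, DecidableEq (ι j)]
    {M : Matrix (Σ j, ι j) (Σ j, ι j) 𝕜} (hM : M.IsBlockDiagonal)
    (hdisj : Pairwise fun j j' => Disjoint (spectrum 𝕜 (M.blockDiag' j))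
      (spectrum 𝕜 (M.blockDiag' j')))
    (D : Matrix (Σ j, ι j) (Σ j, ι j) 𝕜) : ∃ X, (X * M - M * X + D).IsBlockDiagonal := by
  choose Y hY using fun j j' (h : j ≠ j') => exists_mul_sub_mul_eq_of_disjoint_spectrum
    (hdisj h) (-D.submatrix (Sigma.mk j) (Sigma.mk j'))
  refine ⟨of fun p q => if h : p.1 = q.1 then 0 else Y p.1 q.1 h p.2 q.2, ?_⟩
  rintro ⟨j, a⟩ ⟨j', b⟩ (h : j ≠ j')
  have := congr_fun₂ (hY j j' h) a b
  simp only [sub_apply, mul_apply, submatrix_apply, neg_apply, blockDiag'_apply] at this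
  simp [hM.mul_apply_sigma, hM.sigma_mul_apply, h, this]

end Blocks

section Recursion

variable {R : Type*} [Ring R]

/-- The pairs `(T_m, B_m)`. In degree `m + 1`, `D` collects the terms of `T A - B T` free of
`T_(m+1)` and `B_(m+1)`; then `T_(m+1) := solve D` and `B_(m+1)` is forced. -/
def splittingSeq (a : ℕ → R) (solve : R → R) : ℕ → R × R
  | 0 => (1, a 0)
  | m + 1 =>
    let D := ∑ i : Fin (m + 1), (splittingSeq a solve i).1 * a (m + 1 - i) -
      ∑ i : Fin m, (splittingSeq a solve (i + 1)).2 * (splittingSeq a solve (m - i)).1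
    (solve D, solve D * a 0 - a 0 * solve D + D)
decreasing_by all_goals omega

variable (a : ℕ → R)

theorem splittingSeq_succ (solve : R → R) (m : ℕ) :
    let D := ∑ i ∈ range (m + 1), (splittingSeq a solve i).1 * a (m + 1 - i) -
      ∑ i ∈ range m, (splittingSeq a solve (i + 1)).2 * (splittingSeq a solve (m - i)).1
    splittingSeq a solve (m + 1) = (solve D, solve D * a 0 - a 0 * solve D + D) := by
  rw [splittingSeq]
  simp only [Fin.sum_univ_eq_sum_range (fun i => (splittingSeq a solve i).1 * a (m + 1 - i)),
    Fin.sum_univ_eq_sum_range (fun i => (splittingSeq a solve (i + 1)).2 *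
      (splittingSeq a solve (m - i)).1)]

theorem sum_antidiagonal_mul_eq_of_succ {t b : ℕ → R} (ht0 : t 0 = 1) (hb0 : b 0 = a 0)
    (hb : ∀ m, b (m + 1) = t (m + 1) * a 0 - a 0 * t (m + 1) +
      (∑ i ∈ range (m + 1), t i * a (m + 1 - i) - ∑ i ∈ range m, b (i + 1) * t (m - i)))
    (m : ℕ) : ∑ x ∈ antidiagonal m, t x.1 * a x.2 = ∑ x ∈ antidiagonal m, b x.1 * t x.2 := by
  simp only [Nat.sum_antidiagonal_eq_sum_range_succ_mk]
  cases m with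
  | zero => simp [ht0, hb0]
  | succ m =>
    rw [sum_range_succ (fun i => t i * a (m + 1 - i)),
      sum_range_succ' (fun i => b i * t (m + 1 - i)),
      sum_range_succ (fun i => b (i + 1) * t (m + 1 - (i + 1)))]
    simp only [Nat.sub_self, Nat.sub_zero, Nat.add_sub_add_right, hb m, ht0, hb0, mul_one]
    abel

theorem exists_seq_sum_antidiagonal_mul_eq {S : Set R}
    (hsolve : ∀ D, ∃ x, x * a 0 - a 0 * x + D ∈ S) :
    ∃ t b : ℕ → R, t 0 = 1 ∧ b 0 = a 0 ∧ (∀ m, b (m + 1) ∈ S) ∧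
      ∀ m, ∑ x ∈ antidiagonal m, t x.1 * a x.2 = ∑ x ∈ antidiagonal m, b x.1 * t x.2 := by
  choose solve hsolve using hsolve
  set t := fun m => (splittingSeq a solve m).1
  set b := fun m => (splittingSeq a solve m).2
  have ht0 : t 0 = 1 := by simp only [t, splittingSeq]
  have hb0 : b 0 = a 0 := by simp only [b, splittingSeq]
  refine ⟨t, b, ht0, hb0, fun m => ?_,
    sum_antidiagonal_mul_eq_of_succ a ht0 hb0 fun m => ?_⟩
  · simp only [b]
    rw [splittingSeq_succ]
    exact hsolve _
  · simp only [t, b]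
    rw [splittingSeq_succ]

end Recursion

section PowerSeries

variable {R : Type*} {l m n : Type*} [Fintype m]

theorem Matrix.map_coeff_mul [Semiring R] (M : Matrix l m R⟦X⟧) (N : Matrix m n R⟦X⟧) (d : ℕ) :
    (M * N).map (coeff d) = ∑ x ∈ antidiagonal d, M.map (coeff x.1) * N.map (coeff x.2) := by
  ext i k
  simp only [map_apply, mul_apply, map_sum, PowerSeries.coeff_mul, sum_apply]
  exact sum_comm

theorem Matrix.isUnit_iff_isUnit_map_constantCoeff [CommRing R] [DecidableEq m]
    (M : Matrix m m R⟦X⟧) :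
    IsUnit M ↔ IsUnit (M.map constantCoeff) := by
  rw [isUnit_iff_isUnit_det, isUnit_iff_isUnit_det, isUnit_iff_constantCoeff, RingHom.map_det]
  rfl

end PowerSeries

theorem Matrix.IsBlockDiagonal.exists_mul_eq_mul_isBlockDiagonal {κ 𝕜 : Type*} {ι : κ → Type*}
    [Fintype κ] [DecidableEq κ] [∀ j, Fintype (ι j)] [∀ j, DecidableEq (ι j)]
    [Field 𝕜] [IsAlgClosed 𝕜] {A : Matrix (Σ j, ι j) (Σ j, ι j) 𝕜⟦X⟧}
    (hA : (A.map constantCoeff).IsBlockDiagonal)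
    (hdisj : Pairwise fun j j' => Disjoint (spectrum 𝕜 ((A.map constantCoeff).blockDiag' j))
      (spectrum 𝕜 ((A.map constantCoeff).blockDiag' j'))) :
    ∃ T B : Matrix (Σ j, ι j) (Σ j, ι j) 𝕜⟦X⟧, T.map constantCoeff = 1 ∧ T * A = B * T ∧
      B.IsBlockDiagonal ∧ B.map constantCoeff = A.map constantCoeff := by
  have hA0 : A.map (coeff 0) = A.map constantCoeff := by rw [coeff_zero_eq_constantCoeff]
  obtain ⟨t, b, ht0, hb0, hb, hconv⟩ := exists_seq_sum_antidiagonal_mul_eq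
    (fun d => A.map (coeff d)) (S := {M | M.IsBlockDiagonal}) fun D => by
      rw [hA0]
      exact hA.exists_isBlockDiagonal_mul_sub_mul_add hdisj D
  let T : Matrix (Σ j, ι j) (Σ j, ι j) 𝕜⟦X⟧ := of fun p q => mk fun d => t d p q
  let B : Matrix (Σ j, ι j) (Σ j, ι j) 𝕜⟦X⟧ := of fun p q => mk fun d => b d p q
  have hT (d : ℕ) : T.map (coeff d) = t d := by ext; simp [T]
  have hB (d : ℕ) : B.map (coeff d) = b d := by ext; simp [B]
  refine ⟨T, B, ?_, ?_, fun p q h => ?_, ?_⟩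
  · rw [← coeff_zero_eq_constantCoeff, hT, ht0]
  · ext p q d
    have hd : (T * A).map (coeff d) = (B * T).map (coeff d) := by
      simpa only [map_coeff_mul, hT, hB] using hconv d
    exact congr_fun₂ hd p q
  · ext (_ | d)
    · simpa [B, hb0] using hA p q h
    · simpa [B] using hb d p q h
  · rw [← coeff_zero_eq_constantCoeff, hB, hb0]

theorem LaurentSeries.eq_single_mul_ofPowerSeries {R : Type*} [Semiring R] {f : LaurentSeries R}
    {r : ℤ} (h : ∀ m < r, f.coeff m = 0) :
    f = HahnSeries.single r 1 * HahnSeries.ofPowerSeries ℤ R (mk fun m => f.coeff (r + m)) := by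
  ext m
  rw [HahnSeries.coeff_single_mul, one_mul, PowerSeries.coeff_coe]
  split_ifs with hm
  · exact h m (by omega)
  · simp only [coeff_mk]
    congr
    omega

theorem splitting_lemma_blocks_general
    (k : ℕ) (n : Fin k → ℕ) (r : ℤ)
    (A : Matrix ((j : Fin k) × Fin (n j)) ((j : Fin k) × Fin (n j)) (LaurentSeries ℂ))
    (hord : ∀ p q, ∀ m : ℤ, m < r → (A p q).coeff m = 0)
    (hblock : ∀ p q, p.1 ≠ q.1 → (A p q).coeff r = 0)
    (hdisj : ∀ j j' : Fin k, j ≠ j' →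
      Disjoint
        (spectrum ℂ (Matrix.of fun i i' : Fin (n j) => (A ⟨j, i⟩ ⟨j, i'⟩).coeff r))
        (spectrum ℂ (Matrix.of fun i i' : Fin (n j') => (A ⟨j', i⟩ ⟨j', i'⟩).coeff r))) :
    ∃ T : Matrix ((j : Fin k) × Fin (n j)) ((j : Fin k) × Fin (n j)) (PowerSeries ℂ),
      IsUnit T ∧
      (∀ p q, PowerSeries.constantCoeff (T p q) = if p = q then 1 else 0) ∧
      ∃ B : Matrix ((j : Fin k) × Fin (n j)) ((j : Fin k) × Fin (n j)) (LaurentSeries ℂ),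
        T.map (HahnSeries.ofPowerSeries ℤ ℂ) * A = B * T.map (HahnSeries.ofPowerSeries ℤ ℂ) ∧
        (∀ p q, p.1 ≠ q.1 → B p q = 0) ∧
        (∀ p q, ∀ m : ℤ, m < r → (B p q).coeff m = 0) ∧
        (∀ p q, p.1 = q.1 → (B p q).coeff r = (A p q).coeff r) := by
  let c : LaurentSeries ℂ := HahnSeries.single r 1
  let A' : Matrix _ _ ℂ⟦X⟧ := of fun p q => mk fun m => (A p q).coeff (r + m)
  have hA : A = c • A'.map (HahnSeries.ofPowerSeries ℤ ℂ) := by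
    ext p q : 1
    exact LaurentSeries.eq_single_mul_ofPowerSeries (hord p q)
  have hA'0 : A'.map constantCoeff = of fun p q => (A p q).coeff r := by
    ext
    simp [A']
  obtain ⟨T, B, hT, hTB, hB, hB0⟩ := IsBlockDiagonal.exists_mul_eq_mul_isBlockDiagonal
    (A := A') (hA'0 ▸ hblock) (hA'0 ▸ fun j j' h => hdisj j j' h)
  refine ⟨T, (isUnit_iff_isUnit_map_constantCoeff T).mpr (hT ▸ isUnit_one),
    fun p q => by simpa [one_apply] using congr_fun₂ hT p q,
    c • B.map (HahnSeries.ofPowerSeries ℤ ℂ), ?_, fun p q h => by simp [hB p q h],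
    fun p q m hm => ?_, fun p q _ => ?_⟩
  · rw [hA, Matrix.mul_smul _ c, Matrix.smul_mul c, ← Matrix.map_mul, ← Matrix.map_mul, hTB]
  · simp [c, HahnSeries.coeff_single_mul, PowerSeries.coeff_coe, hm]
  · simpa [c, HahnSeries.coeff_single_mul, PowerSeries.coeff_coe, A'] using congr_fun₂ hB0 p q

/-- **Splitting lemma (several blocks).**  Let `A(t) = t^r Σ_{i≥0} A_i t^i` be a square
matrix of formal Laurent series indexed by `Σ j, Fin (n j)` (so of size `n = n 0 + ⋯`),
whose leading coefficient `A_0` is block diagonal with blocks having pairwise disjoint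
sets of eigenvalues.  Then there is `T` over `ℂ[[t]]`, invertible and congruent to the
identity mod `t`, conjugating `A` into a block diagonal matrix `B` of the same shape
`t^r Σ_{i≥0} B_i t^i` with `B_0^{jj} = A_0^{jj}` for every block `j`. -/
theorem splitting_lemma_blocks
    (k : ℕ) (n : Fin k → ℕ) (hn : ∀ j, 0 < n j) (r : ℤ)
    (A : Matrix ((j : Fin k) × Fin (n j)) ((j : Fin k) × Fin (n j)) (LaurentSeries ℂ))
    (hord : ∀ p q, ∀ m : ℤ, m < r → (A p q).coeff m = 0)
    (hblock : ∀ p q, p.1 ≠ q.1 → (A p q).coeff r = 0)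
    (hdisj : ∀ j j' : Fin k, j ≠ j' →
      Disjoint
        (spectrum ℂ (Matrix.of fun i i' : Fin (n j) => (A ⟨j, i⟩ ⟨j, i'⟩).coeff r))
        (spectrum ℂ (Matrix.of fun i i' : Fin (n j') => (A ⟨j', i⟩ ⟨j', i'⟩).coeff r))) :
    ∃ T : Matrix ((j : Fin k) × Fin (n j)) ((j : Fin k) × Fin (n j)) (PowerSeries ℂ),
      IsUnit T ∧
      (∀ p q, PowerSeries.constantCoeff (T p q) = if p = q then 1 else 0) ∧
      ∃ B : Matrix ((j : Fin k) × Fin (n j)) ((j : Fin k) × Fin (n j)) (LaurentSeries ℂ),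
        T.map (HahnSeries.ofPowerSeries ℤ ℂ) * A = B * T.map (HahnSeries.ofPowerSeries ℤ ℂ) ∧
        (∀ p q, p.1 ≠ q.1 → B p q = 0) ∧
        (∀ p q, ∀ m : ℤ, m < r → (B p q).coeff m = 0) ∧
        (∀ p q, p.1 = q.1 → (B p q).coeff r = (A p q).coeff r) :=
  splitting_lemma_blocks_general k n r A hord hblock hdisj
end

section
/- Let r be an integer and A(t) = t^r · Σ_{i≥0} A_i t^i ∈ M(n, ℂ((t))) with A_i ∈ M(n, ℂ), and suppose A_0 = diag(λ_1, …, λ_n) with λ_1, …, λ_n ∈ ℂ pairwise distinct. Then there exists T ∈ M(n, ℂ[[t]]), invertible over ℂ[[t]] and with T ≡ I_n (mod t), such that T A T⁻¹ = diag(g_1, …, g_n) with g_i ∈ ℂ((t)) satisfying g_i − λ_i t^r ∈ t^{r+1} ℂ[[t]]; in particular, the characteristic polynomial factors as det(y I_n − A(t)) = ∏_{i=1}^n (y − g_i) in ℂ((t))[y]. -/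
/-!
Write `A = t^r B` with `B` over `ℂ[[t]]` and `B(0) = Λ := diag(λ)`, and solve `T B = diag(g) T`
degree by degree, starting from `T_0 = 1`, `g_0 = λ`. In degree `k` the new unknowns `T_k`, `g_k`
enter only through `Λ T_k - T_k Λ + diag(g_k)`, the rest involving lower coefficients only.
Since the `λ_i` are distinct, `Y ↦ Λ Y - Y Λ` maps the matrices with zero diagonal onto those
with zero diagonal, and `diag(g_k)` absorbs the diagonal. As `T(0) = 1`, `T` is invertible, and
conjugation preserves the characteristic polynomial.
-/

open Matrix Finset
open scoped PowerSeries LaurentSeries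

namespace Matrix

variable {ι R : Type*} [Fintype ι]

theorem map_coeff_mul_s2 [CommSemiring R] (M N : Matrix ι ι R⟦X⟧) (k : ℕ) :
    (M * N).map (PowerSeries.coeff k) =
      ∑ p ∈ antidiagonal k, M.map (PowerSeries.coeff p.1) * N.map (PowerSeries.coeff p.2) := by
  ext i j
  simp only [map_apply, mul_apply, map_sum, PowerSeries.coeff_mul, sum_apply]
  exact Finset.sum_comm

theorem isUnit_iff_isUnit_map_constantCoeff_s2 [DecidableEq ι] [CommRing R]
    (M : Matrix ι ι R⟦X⟧) :
    IsUnit M ↔ IsUnit (M.map PowerSeries.constantCoeff) := by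
  rw [isUnit_iff_isUnit_det, isUnit_iff_isUnit_det, PowerSeries.isUnit_iff_constantCoeff,
    RingHom.map_det]
  rfl

theorem charpoly_eq_prod_of_mul_eq_diagonal_mul [DecidableEq ι] [CommRing R] {P A : Matrix ι ι R}
    {d : ι → R} (hP : IsUnit P) (h : P * A = diagonal d * P) :
    A.charpoly = ∏ i, (Polynomial.X - Polynomial.C (d i)) := by
  obtain ⟨u, rfl⟩ := hP
  rw [← charpoly_diagonal, ← Units.inv_mul_cancel_left u A, h, charpoly_mul_comm,
    Units.mul_inv_cancel_right]

end Matrix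

noncomputable section FormalDiagonalization

variable {K ι : Type*} [Field K] [Fintype ι] [DecidableEq ι]

def sylvesterSolution (lam : ι → K) (S : Matrix ι ι K) : Matrix ι ι K :=
  of fun i j => if i = j then 0 else S i j / (lam i - lam j)

theorem diagonal_mul_sylvesterSolution_sub {lam : ι → K} (hlam : Function.Injective lam)
    (S : Matrix ι ι K) :
    diagonal lam * sylvesterSolution lam S - sylvesterSolution lam S * diagonal lam
      = S - diagonal S.diag := by
  ext i j
  rcases eq_or_ne i j with rfl | hij
  · simp [sylvesterSolution]
  · have : lam i - lam j ≠ 0 := sub_ne_zero.2 (hlam.ne hij)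
    simp only [sylvesterSolution, Matrix.sub_apply, diagonal_mul, of_apply, hij, ↓reduceIte,
      mul_diagonal, ne_eq, not_false_eq_true, diagonal_apply_ne, sub_zero]
    field_simp

variable (lam : ι → K) (B : Matrix ι ι K⟦X⟧)

/-- With `c a = (T_a, g_a)` the coefficients of `T` and `g`: the `k`-th coefficient of
`T * B - diagonal g * T`. -/
def conjDefect (c : ℕ → Matrix ι ι K × (ι → K)) (k : ℕ) : Matrix ι ι K :=
  ∑ p ∈ antidiagonal k,
    ((c p.1).1 * B.map (PowerSeries.coeff p.2) - diagonal (c p.1).2 * (c p.2).1)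

/-- The coefficients `(T_k, g_k)`. Extending the ones of degree `≤ k` by zero gives the part of
the degree `k + 1` defect not involving the new unknowns (`conjDefect_succ`), which the new
coefficients then cancel. -/
def diagonalizingCoeffs : ℕ → Matrix ι ι K × (ι → K)
  | 0 => (1, lam)
  | k + 1 =>
    let S := conjDefect B (fun a => if a ≤ k then diagonalizingCoeffs a else 0) (k + 1)
    (sylvesterSolution lam S, S.diag)

theorem conjDefect_succ (hB : B.map PowerSeries.constantCoeff = diagonal lam)
    (c : ℕ → Matrix ι ι K × (ι → K)) (hc : c 0 = (1, lam)) (k : ℕ) :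
    conjDefect B c (k + 1) = conjDefect B (fun a => if a ≤ k then c a else 0) (k + 1) -
      (diagonal lam * (c (k + 1)).1 - (c (k + 1)).1 * diagonal lam + diagonal (c (k + 1)).2) := by
  rw [eq_sub_iff_add_eq, ← eq_sub_iff_add_eq', conjDefect, conjDefect, ← sum_sub_distrib,
    sum_eq_add (k + 1, 0) (0, k + 1) (by simp)]
  · simp only [← hB, add_le_iff_nonpos_right, nonpos_iff_eq_zero, one_ne_zero, ↓reduceIte,
      Prod.fst_zero, PowerSeries.coeff_zero_eq_constantCoeff, zero_mul, Prod.snd_zero,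
      diagonal_zero', zero_le, hc, mul_one, sub_self, zero_sub, neg_sub, one_mul, mul_zero,
      sub_zero, sub_sub_cancel]
    abel
  · rintro ⟨a, b⟩ hab hne
    have : a ≤ k ∧ b ≤ k := by
      rw [HasAntidiagonal.mem_antidiagonal] at hab
      simp only [ne_eq, Prod.mk.injEq] at hne
      omega
    simp [this]
  · simp
  · simp

theorem conjDefect_diagonalizingCoeffs (hlam : Function.Injective lam)
    (hB : B.map PowerSeries.constantCoeff = diagonal lam) :
    ∀ k, conjDefect B (diagonalizingCoeffs lam B) k = 0
  | 0 => by simp [conjDefect, diagonalizingCoeffs, ← hB]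
  | k + 1 => by
    rw [conjDefect_succ lam B hB _ (by rw [diagonalizingCoeffs]), diagonalizingCoeffs,
      diagonal_mul_sylvesterSolution_sub hlam]
    abel

theorem exists_mul_eq_diagonal_mul (hlam : Function.Injective lam)
    (hB : B.map PowerSeries.constantCoeff = diagonal lam) :
    ∃ T : Matrix ι ι K⟦X⟧, T.map PowerSeries.constantCoeff = 1 ∧
      ∃ g : ι → K⟦X⟧, (∀ i, PowerSeries.constantCoeff (g i) = lam i) ∧
        T * B = diagonal g * T := by
  set c := diagonalizingCoeffs lam B
  set T : Matrix ι ι K⟦X⟧ := of fun i j => PowerSeries.mk fun k => (c k).1 i j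
  set g : ι → K⟦X⟧ := fun i => PowerSeries.mk fun k => (c k).2 i
  have hT (a : ℕ) : T.map (PowerSeries.coeff a) = (c a).1 := by ext; simp [T]
  have hg (a : ℕ) : (diagonal g).map (PowerSeries.coeff a) = diagonal (c a).2 := by
    rw [diagonal_map (map_zero _)]
    simp [g]
  refine ⟨T, by simpa [c, diagonalizingCoeffs] using hT 0, g,
    fun i => by simp [g, c, diagonalizingCoeffs], ?_⟩
  have hcoeff (k : ℕ) :
      (T * B).map (PowerSeries.coeff k) = (diagonal g * T).map (PowerSeries.coeff k) := by
    rw [map_coeff_mul_s2, map_coeff_mul_s2, ← sub_eq_zero, ← sum_sub_distrib]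
    simpa only [hT, hg, conjDefect] using conjDefect_diagonalizingCoeffs lam B hlam hB k
  ext i j k
  exact congr_fun (congr_fun (hcoeff k) i) j

end FormalDiagonalization

namespace HahnSeries

variable {R : Type*} [Semiring R]

theorem coeff_single_mul_ofPowerSeries_add (f : R⟦X⟧) (r : ℤ) (m : ℕ) :
    (single r 1 * ofPowerSeries ℤ R f).coeff (r + m) = PowerSeries.coeff m f := by
  rw [add_comm, coeff_single_mul_add, one_mul, ofPowerSeries_apply_coeff]

theorem coeff_single_mul_ofPowerSeries_of_lt (f : R⟦X⟧) {r k : ℤ} (hk : k < r) :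
    (single r 1 * ofPowerSeries ℤ R f).coeff k = 0 := by
  rw [coeff_single_mul, one_mul, ofPowerSeries_apply, embDomain_of_notMem_range]
  rintro ⟨m, hm⟩
  simp only [Nat.castOrderEmbedding_apply] at hm
  omega

theorem single_mul_ofPowerSeries_mk {f : R⸨X⸩} {r : ℤ} (hf : ∀ k < r, f.coeff k = 0) :
    single r 1 * ofPowerSeries ℤ R (PowerSeries.mk fun m => f.coeff (r + m)) = f := by
  ext k
  rcases lt_or_ge k r with hk | hk
  · rw [coeff_single_mul_ofPowerSeries_of_lt _ hk, hf k hk]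
  · obtain ⟨m, rfl⟩ : ∃ m : ℕ, k = r + m := ⟨(k - r).toNat, by omega⟩
    rw [coeff_single_mul_ofPowerSeries_add, PowerSeries.coeff_mk]

end HahnSeries

/-- **Formal diagonalization with distinct leading eigenvalues.**
If `A(t) = t^r Σ_{i≥0} A_i t^i` has leading coefficient `A_0 = diag(λ₁, …, λₙ)` with
pairwise distinct `λᵢ`, then there is `T` over `ℂ[[t]]`, invertible and `≡ Iₙ (mod t)`,
with `T A T⁻¹ = diag(g₁, …, gₙ)`, where `gᵢ − λᵢ t^r ∈ t^{r+1} ℂ[[t]]`; in particular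
`det(y Iₙ − A) = ∏ᵢ (y − gᵢ)` in `ℂ((t))[y]`. -/
theorem diagonalization_distinct_leading_term
    (n : ℕ) (r : ℤ) (A : Matrix (Fin n) (Fin n) (LaurentSeries ℂ))
    (lam : Fin n → ℂ) (hlam : Function.Injective lam)
    (hord : ∀ i j, ∀ k : ℤ, k < r → (A i j).coeff k = 0)
    (hA0 : ∀ i j, (A i j).coeff r = if i = j then lam i else 0) :
    ∃ T : Matrix (Fin n) (Fin n) (PowerSeries ℂ),
      IsUnit T ∧
      (∀ p q, PowerSeries.constantCoeff (R := ℂ) (T p q) = if p = q then 1 else 0) ∧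
      ∃ g : Fin n → LaurentSeries ℂ,
        T.map (HahnSeries.ofPowerSeries ℤ ℂ) * A
          = Matrix.diagonal g * T.map (HahnSeries.ofPowerSeries ℤ ℂ) ∧
        (∀ i, ∀ k : ℤ, k < r + 1 → (g i - HahnSeries.single r (lam i)).coeff k = 0) ∧
        A.charpoly = ∏ i, (Polynomial.X - Polynomial.C (g i)) := by
  let φ : Matrix (Fin n) (Fin n) ℂ⟦X⟧ →+* Matrix (Fin n) (Fin n) ℂ⸨X⸩ :=
    (HahnSeries.ofPowerSeries ℤ ℂ).mapMatrix
  let tPow : ℂ⸨X⸩ := HahnSeries.single r 1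
  let B : Matrix (Fin n) (Fin n) ℂ⟦X⟧ := A.map fun f => PowerSeries.mk fun m => f.coeff (r + m)
  have hA : A = tPow • φ B :=
    Matrix.ext fun i j => (HahnSeries.single_mul_ofPowerSeries_mk (hord i j)).symm
  have hB : B.map PowerSeries.constantCoeff = diagonal lam := by
    ext i j
    simp [B, hA0, diagonal_apply]
  obtain ⟨T, hT0, g, hg0, hTB⟩ := exists_mul_eq_diagonal_mul lam B hlam hB
  let g' : Fin n → ℂ⸨X⸩ := fun i => tPow * HahnSeries.ofPowerSeries ℤ ℂ (g i)
  have hconj : φ T * A = diagonal g' * φ T := by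
    rw [hA, Matrix.mul_smul (φ T) tPow (φ B), ← map_mul, hTB, map_mul, RingHom.mapMatrix_apply,
      diagonal_map (map_zero _), ← smul_mul, ← diagonal_smul]
    rfl
  have hT : IsUnit T := (isUnit_iff_isUnit_map_constantCoeff_s2 T).2 (hT0 ▸ isUnit_one)
  refine ⟨T, hT, fun p q => (congr_fun (congr_fun hT0 p) q).trans one_apply, g', hconj, ?_, ?_⟩
  · intro i k hk
    rcases (Int.lt_add_one_iff.1 hk).lt_or_eq with hk | rfl
    · rw [HahnSeries.coeff_sub, HahnSeries.coeff_single_mul_ofPowerSeries_of_lt _ hk,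
        HahnSeries.coeff_single_of_ne hk.ne, sub_zero]
    · simpa [g', tPow, hg0, sub_eq_zero] using
        HahnSeries.coeff_single_mul_ofPowerSeries_add (g i) k 0
  · exact charpoly_eq_prod_of_mul_eq_diagonal_mul (hT.map φ) hconj
end

section
/- Let m be an integer, let D = diag(d_1, …, d_n) with d_1, …, d_n ∈ ℂ((t)) such that for all i ≠ j one has d_i − d_j ≠ 0 and ord(d_i − d_j) < m, and let G ∈ M(n, ℂ((t))) satisfy G − D ∈ t^m M(n, ℂ[[t]]) (i.e. every entry of G − D has order at least m). Then there exists T ∈ M(n, ℂ[[t]]), invertible over ℂ[[t]], such that T G T⁻¹ = diag(g_1, …, g_n) with g_i ∈ ℂ((t)) and g_i − d_i ∈ t^m ℂ[[t]] for each i; consequently det(y I_n − G) = ∏_{i=1}^n (y − g_i) in ℂ((t))[y]. -/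
/-!
Write `G = D + t^m α` with `α` over `ℂ[[t]]` and look for `T = 1 + Q` with `Q` vanishing on the
diagonal. Comparing entries of `T G = diag(g) T` forces `gᵢ = dᵢ + t^m βᵢᵢ` with `β = (1 + Q) α`,
and off the diagonal `(dᵢ - dⱼ) Qᵢⱼ = t^m (βᵢⱼ - βᵢᵢ Qᵢⱼ)`. As `ord(dᵢ - dⱼ) < m`, the factor
`t^m / (dᵢ - dⱼ)` is a power series divisible by `t`, so this is a fixed-point equation for a map
that is contracting in the `t`-adic sense; its solution is built coefficient by coefficient.
Then `Q ≡ 0 mod t` makes `T` invertible, and conjugation preserves the characteristic polynomial.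
-/

open scoped PowerSeries LaurentSeries

namespace PowerSeries

variable {R : Type*} [Ring R]

theorem exists_fixedPoint_of_contracting {ι : Type*} (F : (ι → R⟦X⟧) → ι → R⟦X⟧)
    (hF : ∀ (N : ℕ) (Q Q' : ι → R⟦X⟧),
      (∀ p, X ^ N ∣ Q p - Q' p) → ∀ p, X ^ (N + 1) ∣ F Q p - F Q' p) :
    ∃ Q, F Q = Q := by
  have hcauchy : ∀ N j p, (X : R⟦X⟧) ^ N ∣ F^[N + j] 0 p - F^[N] 0 p := by
    intro N
    induction N with
    | zero => simp
    | succ N ih =>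
      intro j p
      rw [Nat.add_right_comm, Function.iterate_succ_apply', Function.iterate_succ_apply']
      exact hF N _ _ (ih j) p
  let Q : ι → R⟦X⟧ := fun p => mk fun k => coeff k (F^[k + 1] 0 p)
  have happrox : ∀ N p, (X : R⟦X⟧) ^ N ∣ Q p - F^[N] 0 p := by
    refine fun N p => X_pow_dvd_iff.mpr fun k hk => ?_
    have h := X_pow_dvd_iff.mp (hcauchy (k + 1) (N - (k + 1)) p) k (by omega)
    rw [Nat.add_sub_cancel' hk] at h
    simp only [Q, map_sub, coeff_mk, sub_eq_zero] at h ⊢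
    exact h.symm
  refine ⟨Q, funext fun p => sub_eq_zero.mp (ext fun k => ?_)⟩
  have hstep := hF k Q _ (happrox k) p
  rw [← Function.iterate_succ_apply' F] at hstep
  have h := dvd_sub hstep (happrox (k + 1) p)
  rw [sub_sub_sub_cancel_right] at h
  rw [map_zero]
  exact X_pow_dvd_iff.mp h k (lt_add_one k)

theorem exists_matrix_fixedPoint_of_contracting {m n : Type*}
    (F : Matrix m n R⟦X⟧ → Matrix m n R⟦X⟧)
    (hF : ∀ (N : ℕ) (Q Q' : Matrix m n R⟦X⟧),
      (∀ i j, X ^ N ∣ Q i j - Q' i j) → ∀ i j, X ^ (N + 1) ∣ F Q i j - F Q' i j) :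
    ∃ Q, F Q = Q := by
  obtain ⟨q, hq⟩ := exists_fixedPoint_of_contracting (ι := m × n)
    (fun q => Function.uncurry (F (Matrix.of (Function.curry q))))
    (fun N q q' h p => hF N _ _ (fun i j => h (i, j)) p.1 p.2)
  exact ⟨Matrix.of (Function.curry q), congrArg (Matrix.of ∘ Function.curry) hq⟩

end PowerSeries

namespace LaurentSeries

open HahnSeries

theorem forall_coeff_lt_eq_zero_iff {R : Type*} [Semiring R] (m : ℤ) (f : R⸨X⸩) :
    (∀ k < m, f.coeff k = 0) ↔ ∃ x : R⟦X⟧, f = single m 1 * (x : R⸨X⸩) := by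
  refine ⟨fun hf => ⟨PowerSeries.mk fun k => f.coeff (m + k), ?_⟩, ?_⟩
  · ext k
    rw [coeff_single_mul, one_mul, PowerSeries.coeff_coe]
    split_ifs with hk
    · exact hf k (by omega)
    · rw [PowerSeries.coeff_mk]
      congr 1
      omega
  · rintro ⟨x, rfl⟩ k hk
    rw [coeff_single_mul, one_mul, PowerSeries.coeff_coe, if_pos (by omega)]

theorem exists_X_dvd_mul_eq_single {K : Type*} [Field K] {f : K⸨X⸩} (hf : f ≠ 0) {m : ℤ}
    (hm : f.order < m) :
    ∃ v : K⟦X⟧, PowerSeries.X ∣ v ∧ (v : K⸨X⸩) * f = single m 1 := by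
  have hunit : PowerSeries.constantCoeff f.powerSeriesPart ≠ 0 := by
    rw [← PowerSeries.coeff_zero_eq_constantCoeff_apply, powerSeriesPart_coeff, Nat.cast_zero,
      add_zero]
    exact coeff_order_eq_zero.not.mpr hf
  refine ⟨PowerSeries.X ^ (m - f.order).toNat * f.powerSeriesPart⁻¹,
    dvd_mul_of_dvd_left (dvd_pow_self _ (by omega)) _, ?_⟩
  calc _ = ofPowerSeries ℤ K (PowerSeries.X ^ (m - f.order).toNat * f.powerSeriesPart⁻¹)
        * (single f.order 1 * ofPowerSeries ℤ K f.powerSeriesPart) := by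
        rw [single_order_mul_powerSeriesPart]
    _ = single ((m - f.order).toNat + f.order) 1
          * ofPowerSeries ℤ K (f.powerSeriesPart⁻¹ * f.powerSeriesPart) := by
        rw [map_mul, map_mul, ofPowerSeries_X_pow, ← one_mul (1 : K), ← single_mul_single]
        simp only [mul_one]
        ring
    _ = single m 1 := by
        rw [PowerSeries.inv_mul_cancel _ hunit, (ofPowerSeries ℤ K).map_one, mul_one,
          show ((m - f.order).toNat : ℤ) + f.order = m by omega]

end LaurentSeries

namespace Matrix

variable {n : Type*} [Fintype n] [DecidableEq n]

theorem charpoly_eq_of_mul_eq_mul {R : Type*} [CommRing R] {P A B : Matrix n n R}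
    (hP : IsUnit P) (h : P * A = B * P) : A.charpoly = B.charpoly := by
  obtain ⟨u, rfl⟩ := hP
  calc A.charpoly = (u⁻¹.val * (B * u.val)).charpoly := by
        rw [← h, ← mul_assoc, u.inv_mul, one_mul]
    _ = B.charpoly := by rw [charpoly_mul_comm, mul_assoc, u.mul_inv, mul_one]

theorem isUnit_one_add_of_X_dvd {R : Type*} [CommRing R] {Q : Matrix n n R⟦X⟧}
    (hQ : ∀ i j, PowerSeries.X ∣ Q i j) : IsUnit (1 + Q) := by
  have hconst : (1 + Q).map PowerSeries.constantCoeff = 1 := by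
    ext i j
    rcases eq_or_ne i j with rfl | hij <;> simp [PowerSeries.X_dvd_iff.mp (hQ _ _), *]
  rw [isUnit_iff_isUnit_det, PowerSeries.isUnit_iff_constantCoeff, RingHom.map_det,
    RingHom.mapMatrix_apply, hconst, det_one]
  exact isUnit_one

theorem one_add_mul_diagonal_add_eq_diagonal_mul {R : Type*} [CommRing R] (d : n → R)
    (A Q : Matrix n n R) (hQ : ∀ i, Q i i = 0)
    (hoff : ∀ i j, i ≠ j →
      (d i - d j) * Q i j = ((1 + Q) * A) i j - ((1 + Q) * A) i i * Q i j) :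
    (1 + Q) * (diagonal d + A) = diagonal (fun i => d i + ((1 + Q) * A) i i) * (1 + Q) := by
  rw [mul_add, add_mul 1 Q (diagonal d), one_mul]
  ext i j
  rcases eq_or_ne i j with rfl | hij
  · simp [hQ]
  · simp only [add_apply, ne_eq, hij, not_false_eq_true, diagonal_apply_ne, mul_diagonal,
      zero_add, diagonal_mul, one_apply_ne]
    linear_combination -hoff i j hij

end Matrix

section OffDiagCorrection

open HahnSeries

variable {R : Type*} [CommRing R] {n : Type*} [Fintype n] [DecidableEq n]

/-- With `v i j = t^m / (d i - d j)`, a fixed point `Q` is exactly what makes `1 + Q` conjugate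
`diagonal d + t^m α` to a diagonal matrix. -/
noncomputable def offDiagCorrection (α v Q : Matrix n n R⟦X⟧) : Matrix n n R⟦X⟧ :=
  Matrix.of fun i j => if i = j then 0 else
    v i j * (((1 + Q) * α) i j - ((1 + Q) * α) i i * Q i j)

theorem X_pow_succ_dvd_offDiagCorrection_sub (α v : Matrix n n R⟦X⟧)
    (hv : ∀ i j, i ≠ j → PowerSeries.X ∣ v i j) (N : ℕ) (Q Q' : Matrix n n R⟦X⟧)
    (hQ : ∀ i j, PowerSeries.X ^ N ∣ Q i j - Q' i j) (i j : n) :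
    PowerSeries.X ^ (N + 1) ∣ offDiagCorrection α v Q i j - offDiagCorrection α v Q' i j := by
  have hB : ∀ i j, PowerSeries.X ^ N ∣ ((1 + Q) * α) i j - ((1 + Q') * α) i j := by
    intro i j
    rw [← Matrix.sub_apply, ← sub_mul, add_sub_add_left_eq_sub, Matrix.mul_apply]
    exact Finset.dvd_sum fun k _ => dvd_mul_of_dvd_left (hQ i k) _
  rcases eq_or_ne i j with rfl | hij
  · simp [offDiagCorrection]
  · simp only [offDiagCorrection, Matrix.of_apply, if_neg hij, ← mul_sub, pow_succ']
    have h := dvd_sub (hB i j) (dvd_mul_sub_mul (hB i i) (hQ i j))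
    rw [sub_sub_sub_comm] at h
    exact mul_dvd_mul (hv i j hij) h

theorem exists_isUnit_mul_eq_diagonal_mul (m : ℤ) (d : n → R⸨X⸩) (α v : Matrix n n R⟦X⟧)
    (hvX : ∀ i j, i ≠ j → PowerSeries.X ∣ v i j)
    (hv : ∀ i j, i ≠ j → (v i j : R⸨X⸩) * (d i - d j) = single m 1) :
    ∃ T : Matrix n n R⟦X⟧, IsUnit T ∧ ∃ β : n → R⟦X⟧,
      T.map (ofPowerSeries ℤ R)
          * (Matrix.diagonal d + single m (1 : R) • α.map (ofPowerSeries ℤ R))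
        = Matrix.diagonal (fun i => d i + single m 1 * (β i : R⸨X⸩))
          * T.map (ofPowerSeries ℤ R) := by
  set φ := ofPowerSeries ℤ R
  obtain ⟨Q, hQ⟩ := PowerSeries.exists_matrix_fixedPoint_of_contracting
    (offDiagCorrection α v) (X_pow_succ_dvd_offDiagCorrection_sub α v hvX)
  set B := (1 + Q) * α
  have hQdiag : ∀ i, Q i i = 0 := fun i => by
    rw [← hQ]
    simp [offDiagCorrection]
  have hQoff : ∀ i j, i ≠ j → Q i j = v i j * (B i j - B i i * Q i j) := fun i j hij => by
    conv_lhs => rw [← hQ]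
    simp [offDiagCorrection, hij, B]
  have hQX : ∀ i j, PowerSeries.X ∣ Q i j := fun i j => by
    rcases eq_or_ne i j with rfl | hij
    · simp [hQdiag]
    · rw [hQoff i j hij]
      exact dvd_mul_of_dvd_left (hvX i j hij) _
  have hTφ : (1 + Q).map φ = 1 + Q.map φ := by
    rw [Matrix.map_add _ φ.map_add, Matrix.map_one _ φ.map_zero φ.map_one]
  have hBφ : (1 + Q.map φ) * (single m (1 : R) • α.map φ) = single m (1 : R) • B.map φ := by
    rw [Matrix.mul_smul, ← hTφ, ← Matrix.map_mul]
  have hoff : ∀ i j, i ≠ j → (d i - d j) * φ (Q i j)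
      = (single m (1 : R) • B.map φ) i j - (single m (1 : R) • B.map φ) i i * φ (Q i j) := by
    intro i j hij
    calc (d i - d j) * φ (Q i j) = φ (v i j) * (d i - d j) * φ (B i j - B i i * Q i j) := by
          conv_lhs => rw [hQoff i j hij]
          rw [map_mul]
          ring
      _ = _ := by
          rw [hv i j hij, map_sub, map_mul]
          simp only [Matrix.smul_apply, Matrix.map_apply, smul_eq_mul]
          ring
  refine ⟨1 + Q, Matrix.isUnit_one_add_of_X_dvd hQX, fun i => B i i, ?_⟩
  rw [hTφ, Matrix.one_add_mul_diagonal_add_eq_diagonal_mul d _ _ (by simp [hQdiag])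
    (by rwa [hBφ]), hBφ]
  rfl

end OffDiagCorrection

/-- **Diagonalization of a perturbed diagonal matrix.**
Let `D = diag(d₁, …, dₙ)` over `ℂ((t))` with `dᵢ − dⱼ ≠ 0` and `ord(dᵢ − dⱼ) < m`
for all `i ≠ j`, and let `G` satisfy `G − D ∈ t^m M(n, ℂ[[t]])`.  Then there is `T`
over `ℂ[[t]]`, invertible over `ℂ[[t]]`, with `T G T⁻¹ = diag(g₁, …, gₙ)` where
`gᵢ − dᵢ ∈ t^m ℂ[[t]]`; consequently `det(y Iₙ − G) = ∏ᵢ (y − gᵢ)` in `ℂ((t))[y]`. -/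
theorem diagonalization_separated_diagonal
    (n : ℕ) (m : ℤ) (d : Fin n → LaurentSeries ℂ)
    (hd : ∀ i j, i ≠ j → d i - d j ≠ 0 ∧ (d i - d j).order < m)
    (G : Matrix (Fin n) (Fin n) (LaurentSeries ℂ))
    (hG : ∀ i j, ∀ k : ℤ, k < m → ((G - Matrix.diagonal d) i j).coeff k = 0) :
    ∃ T : Matrix (Fin n) (Fin n) (PowerSeries ℂ),
      IsUnit T ∧
      ∃ g : Fin n → LaurentSeries ℂ,
        T.map (HahnSeries.ofPowerSeries ℤ ℂ) * G
          = Matrix.diagonal g * T.map (HahnSeries.ofPowerSeries ℤ ℂ) ∧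
        (∀ i, ∀ k : ℤ, k < m → (g i - d i).coeff k = 0) ∧
        G.charpoly = ∏ i, (Polynomial.X - Polynomial.C (g i)) := by
  obtain ⟨α, hα⟩ : ∃ α : Matrix (Fin n) (Fin n) ℂ⟦X⟧,
      G = Matrix.diagonal d
        + HahnSeries.single m (1 : ℂ) • α.map (HahnSeries.ofPowerSeries ℤ ℂ) := by
    choose α hα using fun i j => (LaurentSeries.forall_coeff_lt_eq_zero_iff m _).mp (hG i j)
    exact ⟨Matrix.of α, sub_eq_iff_eq_add'.mp (Matrix.ext hα)⟩
  have hsep : ∀ i j, ∃ v : ℂ⟦X⟧, i ≠ j →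
      PowerSeries.X ∣ v ∧ (v : ℂ⸨X⸩) * (d i - d j) = HahnSeries.single m 1 := by
    intro i j
    by_cases hij : i = j
    · exact ⟨0, absurd hij⟩
    · obtain ⟨v, hv⟩ := LaurentSeries.exists_X_dvd_mul_eq_single (hd i j hij).1 (hd i j hij).2
      exact ⟨v, fun _ => hv⟩
  choose v hv using hsep
  obtain ⟨T, hT, β, hTG⟩ := exists_isUnit_mul_eq_diagonal_mul m d α (Matrix.of v)
    (fun i j hij => (hv i j hij).1) (fun i j hij => (hv i j hij).2)
  rw [← hα] at hTG
  refine ⟨T, hT, _, hTG, fun i => (LaurentSeries.forall_coeff_lt_eq_zero_iff m _).mpr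
    ⟨β i, add_sub_cancel_left _ _⟩, ?_⟩
  rw [Matrix.charpoly_eq_of_mul_eq_mul (hT.map (HahnSeries.ofPowerSeries ℤ ℂ).mapMatrix) hTG,
    Matrix.charpoly_diagonal]
end

section
/- Let p_1, …, p_n be pairwise distinct elements of t⁻¹ℂ[t⁻¹], let G ∈ M(n, ℂ((t^s))), and suppose det(y I_n − G) = ∏_{i=1}^n (y − g_i) in ℂ((t))[y] with g_i ∈ ℂ((t)) satisfying pr⁻(z · g_i) = p_i for each i, where z = t^s. Then the automorphism ξ permutes the roots compatibly with the principal parts: there is a permutation σ of {1, …, n} such that ξ(g_i) = g_{σ(i)} and p_{σ(i)} = ξ(p_i) for all i. Consequently, if r_i denotes the least positive integer with ξ^{r_i}(p_i) = p_i (so r_i divides s), then ξ^{r_i}(g_i) = g_i, i.e. g_i lies in the subfield ℂ((t^{s/r_i})), and the ξ-orbit of g_i consists of exactly the r_i elements g_i, ξ(g_i), …, ξ^{r_i−1}(g_i). -/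
/-!
`ξ` fixes every series supported on multiples of `s`, hence fixes `G` and its characteristic
polynomial, and so permutes its roots `gᵢ`. Since `pᵢ = pr⁻(z gᵢ)`, the `gᵢ` are distinct, and
because `ξ` fixes `z` and commutes with `pr⁻` (it acts coefficientwise), the permutation of the
`gᵢ` is also the permutation of the `pᵢ`. Hence `gᵢ` and `pᵢ` have the same minimal period `r`
under `ξ`, which divides `s` as `ξ^s = id`. Finally `ξ^r gᵢ = gᵢ` says `ζ^{rk} = 1` whenever
the `k`-th coefficient of `gᵢ` is nonzero, i.e. `s ∣ rk`, i.e. `s/r ∣ k`.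
-/

namespace Function

variable {α β : Type*} {f : α → α} {x : α}

theorem minimalPeriod_eq_of_isPeriodicPt_of_forall_lt {r : ℕ} (hr : 0 < r)
    (hx : IsPeriodicPt f r x) (hmin : ∀ m, 0 < m → m < r → f^[m] x ≠ x) :
    minimalPeriod f x = r := by
  refine (hx.minimalPeriod_le hr).antisymm (not_lt.mp fun hlt => ?_)
  exact hmin _ (hx.minimalPeriod_pos hr) hlt iterate_minimalPeriod

theorem Semiconj.minimalPeriod_eq {g : α → β} {fb : β → β} (h : Semiconj g f fb)
    (hg : Injective g) : minimalPeriod fb (g x) = minimalPeriod f x := by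
  refine minimalPeriod_eq_minimalPeriod_iff.mpr fun n => ?_
  simp only [IsPeriodicPt, IsFixedPt, ← (h.iterate_right n) x, hg.eq_iff]

theorem range_iterate_eq_image_Iio_minimalPeriod (hx : x ∈ periodicPts f) :
    Set.range (fun m : ℕ => f^[m] x) =
      (fun m : ℕ => f^[m] x) '' Set.Iio (minimalPeriod f x) := by
  refine (Set.image_subset_range _ _).antisymm' ?_
  rintro _ ⟨m, rfl⟩
  exact ⟨m % minimalPeriod f x, Nat.mod_lt _ (minimalPeriod_pos_of_mem_periodicPts hx),
    iterate_mod_minimalPeriod_eq⟩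

end Function

namespace Polynomial

theorem exists_perm_apply_eq_of_map_prod_X_sub_C_eq {R ι : Type*} [CommRing R] [IsDomain R]
    [Fintype ι] (φ : R ≃+* R) {g : ι → R} (hg : Function.Injective g)
    (h : (∏ i, (X - C (g i))).map (φ : R →+* R) = ∏ i, (X - C (g i))) :
    ∃ σ : Equiv.Perm ι, ∀ i, φ (g i) = g (σ i) := by
  have hroot : ∀ i, ∃ j, φ (g i) = g j := by
    intro i
    have hφg : (∏ j, (X - C (g j))).IsRoot (φ (g i)) := by
      rw [← h, IsRoot, eval_map, ← RingEquiv.coe_toRingHom, eval₂_at_apply, eval_prod,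
        Finset.prod_eq_zero (Finset.mem_univ i) (by simp), map_zero]
    obtain ⟨j, -, hj⟩ := (isRoot_prod _ _ _).mp hφg
    exact ⟨j, sub_eq_zero.mp (by simpa using hj)⟩
  choose σ hσ using hroot
  have hσinj : Function.Injective σ := fun i j hij =>
    hg (φ.injective (by rw [hσ, hσ, hij]))
  exact ⟨Equiv.ofBijective σ hσinj.bijective_of_finite, hσ⟩

end Polynomial

namespace LaurentSeries

open HahnSeries

variable {K : Type*} [Field K] {ξ : LaurentSeries K → LaurentSeries K} {ζ : K}

theorem eq_truncLT_zero_of_coeff {a b : LaurentSeries K} (hb : ∀ k : ℤ, 0 ≤ k → b.coeff k = 0)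
    (hab : ∀ k : ℤ, k < 0 → (a - b).coeff k = 0) : b = truncLT 0 a := by
  ext k
  rcases lt_or_ge k 0 with hk | hk
  · rw [coeff_truncLT_of_lt hk, eq_comm, ← sub_eq_zero, ← coeff_sub, hab k hk]
  · rw [coeff_truncLT_of_le hk, hb k hk]

variable (hξ : ∀ f k, (ξ f).coeff k = ζ ^ k * f.coeff k)
include hξ

theorem truncLT_apply_of_coeff_eq_zpow_mul (c : ℤ) (f : LaurentSeries K) :
    truncLT c (ξ f) = ξ (truncLT c f) := by
  ext k
  rcases lt_or_ge k c with hk | hk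
  · rw [coeff_truncLT_of_lt hk, hξ, hξ, coeff_truncLT_of_lt hk]
  · rw [coeff_truncLT_of_le hk, hξ, coeff_truncLT_of_le hk, mul_zero]

theorem coeff_iterate_of_coeff_eq_zpow_mul (m : ℕ) (f : LaurentSeries K) (k : ℤ) :
    (ξ^[m] f).coeff k = (ζ ^ k) ^ m * f.coeff k := by
  induction m with
  | zero => simp
  | succ m ih => rw [Function.iterate_succ_apply', hξ, ih, pow_succ', mul_assoc]

variable {s : ℕ}

theorem apply_eq_self_of_coeff_eq_zpow_mul (hζ : ζ ^ s = 1) {f : LaurentSeries K}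
    (hf : ∀ k : ℤ, ¬ (s : ℤ) ∣ k → f.coeff k = 0) : ξ f = f := by
  ext k
  rw [hξ]
  by_cases hk : (s : ℤ) ∣ k
  · obtain ⟨m, rfl⟩ := hk
    rw [zpow_mul, zpow_natCast, hζ, one_zpow, one_mul]
  · rw [hf k hk, mul_zero]

theorem iterate_eq_self_of_coeff_eq_zpow_mul (hζ : ζ ^ s = 1) (f : LaurentSeries K) :
    ξ^[s] f = f := by
  ext k
  rw [coeff_iterate_of_coeff_eq_zpow_mul hξ, ← zpow_natCast (ζ ^ k), ← zpow_mul, mul_comm k,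
    zpow_mul, zpow_natCast, hζ, one_zpow, one_mul]

theorem coeff_eq_zero_of_iterate_eq_self (hζ : IsPrimitiveRoot ζ s) {r : ℕ} (hr : 0 < r)
    (hrs : r ∣ s) {f : LaurentSeries K} (hf : ξ^[r] f = f) (k : ℤ)
    (hk : ¬ ((s / r : ℕ) : ℤ) ∣ k) : f.coeff k = 0 := by
  by_contra hne
  have hfk := congrArg (coeff · k) hf
  simp only [coeff_iterate_of_coeff_eq_zpow_mul hξ] at hfk
  have hone : ζ ^ (k * r) = 1 := by
    rw [zpow_mul, zpow_natCast]
    exact (mul_eq_right₀ hne).mp hfk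
  obtain ⟨c, rfl⟩ := hrs
  rw [hζ.zpow_eq_one_iff_dvd, Nat.cast_mul, mul_comm k,
    mul_dvd_mul_iff_left (by exact_mod_cast hr.ne')] at hone
  rw [Nat.mul_div_cancel_left _ hr] at hk
  exact hk hone

end LaurentSeries

open Polynomial

open Function LaurentSeries

/-- **Galois action on the roots of the characteristic polynomial.**
Let `ξ` be the automorphism of `ℂ((t))` multiplying the `k`-th coefficient by `ζ^k`,
`ζ = exp(2πi/s)`.  Let `p₁, …, pₙ ∈ t⁻¹ℂ[t⁻¹]` be pairwise distinct, let `G` be a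
matrix over the subfield `ℂ((t^s))`, and suppose `det(y Iₙ − G) = ∏ᵢ (y − gᵢ)` with
`pr⁻(z·gᵢ) = pᵢ` (`z = t^s`).  Then `ξ` permutes the roots compatibly with the
principal parts: there is a permutation `σ` with `ξ(gᵢ) = g_{σ(i)}` and
`p_{σ(i)} = ξ(pᵢ)`.  Consequently, if `r` is the least positive integer with
`ξ^r(pᵢ) = pᵢ`, then `r ∣ s`, `ξ^r(gᵢ) = gᵢ`, `gᵢ ∈ ℂ((t^{s/r}))`, and the `ξ`-orbit
of `gᵢ` consists of exactly the `r` distinct elements `gᵢ, ξ(gᵢ), …, ξ^{r−1}(gᵢ)`. -/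
theorem galois_orbits_of_roots
    (n s : ℕ) (hs : 0 < s)
    (ξ : LaurentSeries ℂ ≃+* LaurentSeries ℂ)
    (hξ : ∀ f : LaurentSeries ℂ, ∀ k : ℤ,
      (ξ f).coeff k = Complex.exp (2 * (Real.pi : ℂ) * Complex.I / (s : ℂ)) ^ k * f.coeff k)
    (p : Fin n → LaurentSeries ℂ)
    (hp : ∀ i, ∀ k : ℤ, 0 ≤ k → (p i).coeff k = 0)
    (hpdist : Function.Injective p)
    (G : Matrix (Fin n) (Fin n) (LaurentSeries ℂ))
    (hG : ∀ i j, ∀ k : ℤ, ¬ ((s : ℤ) ∣ k) → (G i j).coeff k = 0)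
    (g : Fin n → LaurentSeries ℂ)
    (hfact : G.charpoly = ∏ i, (Polynomial.X - Polynomial.C (g i)))
    (hpr : ∀ i, ∀ k : ℤ, k < 0 →
      (HahnSeries.single (s : ℤ) (1 : ℂ) * g i - p i).coeff k = 0) :
    (∃ σ : Equiv.Perm (Fin n), ∀ i, ξ (g i) = g (σ i) ∧ p (σ i) = ξ (p i)) ∧
    ∀ i : Fin n, ∀ r : ℕ, 0 < r → (⇑ξ)^[r] (p i) = p i →
      (∀ m : ℕ, 0 < m → m < r → (⇑ξ)^[m] (p i) ≠ p i) →
      r ∣ s ∧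
      (⇑ξ)^[r] (g i) = g i ∧
      (∀ k : ℤ, ¬ (((s / r : ℕ) : ℤ) ∣ k) → (g i).coeff k = 0) ∧
      Set.range (fun m : ℕ => (⇑ξ)^[m] (g i))
        = (fun j : ℕ => (⇑ξ)^[j] (g i)) '' Set.Iio r ∧
      Set.InjOn (fun j : ℕ => (⇑ξ)^[j] (g i)) (Set.Iio r) := by
  have hζ := Complex.isPrimitiveRoot_exp s hs.ne'
  set z : LaurentSeries ℂ := HahnSeries.single (s : ℤ) 1
  have hpz : ∀ i, p i = HahnSeries.truncLT 0 (z * g i) := fun i =>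
    eq_truncLT_zero_of_coeff (hp i) (hpr i)
  have hginj : Injective g := fun i j hij => hpdist (by rw [hpz, hpz, hij])
  have hGξ : G.map ξ = G := Matrix.ext fun i j =>
    apply_eq_self_of_coeff_eq_zpow_mul hξ hζ.pow_eq_one (hG i j)
  obtain ⟨σ, hσg⟩ := exists_perm_apply_eq_of_map_prod_X_sub_C_eq ξ hginj <| by
    rw [← hfact, ← Matrix.charpoly_map, RingEquiv.coe_toRingHom, hGξ]
  have hzξ : ξ z = z := apply_eq_self_of_coeff_eq_zpow_mul hξ hζ.pow_eq_one fun k hk =>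
    HahnSeries.coeff_single_of_ne (by rintro rfl; exact hk dvd_rfl)
  have hσp : ∀ i, p (σ i) = ξ (p i) := fun i => by
    rw [hpz, hpz, ← hσg, ← truncLT_apply_of_coeff_eq_zpow_mul hξ, map_mul ξ, hzξ]
  refine ⟨⟨σ, fun i => ⟨hσg i, hσp i⟩⟩, fun i r hr hper hmin => ?_⟩
  have hperiod_p : minimalPeriod ξ (p i) = r :=
    minimalPeriod_eq_of_isPeriodicPt_of_forall_lt hr hper hmin
  have hperiod_g : minimalPeriod ξ (g i) = r := by
    rw [Semiconj.minimalPeriod_eq (fun j => (hσg j).symm) hginj,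
      ← Semiconj.minimalPeriod_eq hσp hpdist, hperiod_p]
  have hrs : r ∣ s := hperiod_p ▸ IsPeriodicPt.minimalPeriod_dvd
    (iterate_eq_self_of_coeff_eq_zpow_mul hξ hζ.pow_eq_one (p i))
  have hgr : ξ^[r] (g i) = g i := hperiod_g ▸ iterate_minimalPeriod
  refine ⟨hrs, hgr, coeff_eq_zero_of_iterate_eq_self hξ hζ hr hrs hgr, ?_, ?_⟩
  · rw [range_iterate_eq_image_Iio_minimalPeriod (mk_mem_periodicPts hr hgr), hperiod_g]
  · exact hperiod_g ▸ iterate_injOn_Iio_minimalPeriod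
end

section
/- Let p_1, …, p_n be pairwise distinct elements of t⁻¹ℂ[t⁻¹], let G ∈ M(n, ℂ((t^s))), and suppose det(y I_n − G) = ∏_{i=1}^n (y − g_i) in ℂ((t))[y] with g_i ∈ ℂ((t)) satisfying pr⁻(z · g_i) = p_i for each i, where z = t^s. Then ξ permutes the set {g_1, …, g_n}, and for each ξ-orbit O of this set, choosing a representative g ∈ O and writing r = |O|, the polynomial P_O(y) := ∏_{j=0}^{r−1} (y − ξ^j(g)) has all its coefficients in the subfield ℂ((t^s)) and is irreducible in ℂ((t^s))[y]; moreover det(y I_n − G) = ∏_O P_O(y), the product over all ξ-orbits, is the factorization of the characteristic polynomial of G into irreducible factors in ℂ((t^s))[y]. -/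
/-!
The automorphism `ξ` fixes exactly `ℂ((t^s))` and `ξ^s = id`, so every Laurent series is
`ξ`-periodic. As `G` has entries in the fixed field, its characteristic polynomial is
`ξ`-invariant, hence `ξ` permutes its roots `gᵢ`; these are pairwise distinct because `gᵢ`
determines the principal part `pᵢ` of `z gᵢ`. So the roots split into `ξ`-orbits and the
characteristic polynomial is the product of the orbit polynomials `P_O`, each `ξ`-invariant.
The roots of a `ξ`-invariant polynomial are stable under `ξ`, so a `ξ`-invariant factor of
`P_O` sharing one root with it has all `|O|` of them: `P_O` is irreducible over `ℂ((t^s))`.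
-/

open Polynomial

/-- A Laurent series lies in the subfield `ℂ((t^s))` iff all coefficients with exponent
not divisible by `s` vanish. -/
def InSubfieldPow (s : ℕ) (f : LaurentSeries ℂ) : Prop :=
  ∀ k : ℤ, ¬ ((s : ℤ) ∣ k) → f.coeff k = 0

/-- The polynomial `P_O(y) = ∏_{j=0}^{r−1} (y − ξ^j(g))` attached to the `ξ`-orbit of `g`,
where `r` is the least positive period of `g` under `ξ`. -/
noncomputable def orbitPoly (ξ : LaurentSeries ℂ ≃+* LaurentSeries ℂ)
    (g : LaurentSeries ℂ) : Polynomial (LaurentSeries ℂ) :=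
  ∏ j ∈ Finset.range (Function.minimalPeriod ⇑ξ g),
    (Polynomial.X - Polynomial.C ((⇑ξ)^[j] g))

open Function

namespace Function

variable {α : Type*} {f : α → α}

theorem periodicOrbit_eq_periodicOrbit_iff {x y : α} (hx : x ∈ periodicPts f)
    (hy : y ∈ periodicPts f) : periodicOrbit f x = periodicOrbit f y ↔ ∃ n, f^[n] x = y := by
  constructor
  · intro h
    rw [← mem_periodicOrbit_iff hx, h]
    exact self_mem_periodicOrbit hy
  · rintro ⟨n, rfl⟩
    exact (periodicOrbit_apply_iterate_eq hx n).symm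

variable {ι M : Type*} {g : ι → α}

theorem image_setOf_iterate_eq (hmaps : Set.MapsTo f (Set.range g) (Set.range g)) {l : ι}
    (hl : g l ∈ periodicPts f) :
    g '' {i | ∃ n, f^[n] (g l) = g i} = (f^[·] (g l)) '' Set.Iio (minimalPeriod f (g l)) := by
  ext y
  constructor
  · rintro ⟨i, ⟨n, hn⟩, rfl⟩
    exact ⟨n % minimalPeriod f (g l), Nat.mod_lt _ (minimalPeriod_pos_of_mem_periodicPts hl),
      iterate_mod_minimalPeriod_eq.trans hn⟩
  · rintro ⟨n, -, rfl⟩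
    obtain ⟨i, hi⟩ := hmaps.iterate n (Set.mem_range_self l)
    exact ⟨i, ⟨n, hi.symm⟩, hi⟩

theorem prod_filter_iterate_eq [Fintype ι] [CommMonoid M] [DecidableEq α] (hg : Injective g)
    (hmaps : Set.MapsTo f (Set.range g) (Set.range g)) {l : ι} (hl : g l ∈ periodicPts f)
    (F : α → M) [DecidablePred fun i => ∃ n, f^[n] (g l) = g i] :
    ∏ i with ∃ n, f^[n] (g l) = g i, F (g i) =
      ∏ j ∈ Finset.range (minimalPeriod f (g l)), F (f^[j] (g l)) := by
  rw [← Finset.prod_image hg.injOn, ← Finset.prod_image (g := (f^[·] (g l)))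
    (by simpa using iterate_injOn_Iio_minimalPeriod)]
  congr 1
  apply Finset.coe_injective
  simpa using image_setOf_iterate_eq hmaps hl

theorem exists_orbit_representatives_prod_eq [Fintype ι] [CommMonoid M] (hg : Injective g)
    (hmaps : Set.MapsTo f (Set.range g) (Set.range g)) (hper : ∀ i, g i ∈ periodicPts f)
    (F : α → M) :
    ∃ Rep : Finset ι, (∀ i, ∃! l, l ∈ Rep ∧ ∃ n, f^[n] (g l) = g i) ∧
      ∏ i, F (g i) = ∏ l ∈ Rep, ∏ j ∈ Finset.range (minimalPeriod f (g l)), F (f^[j] (g l)) := by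
  classical
  -- `rep i` is a canonical index of the `f`-orbit of `g i`, which is classified by `periodicOrbit`.
  let rep : ι → ι := fun i => (⟦i⟧ : Quotient (Setoid.ker fun i => periodicOrbit f (g i))).out
  have rep_eq_iff (i j : ι) : rep i = rep j ↔ ∃ n, f^[n] (g i) = g j :=
    Quotient.out_inj.trans <| Quotient.eq.trans <|
      periodicOrbit_eq_periodicOrbit_iff (hper i) (hper j)
  have rep_rep (i : ι) : rep (rep i) = rep i := congrArg Quotient.out (Quotient.out_eq _)
  have mem_image (i : ι) : rep i ∈ Finset.univ.image rep :=
    Finset.mem_image_of_mem _ (Finset.mem_univ i)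
  refine ⟨Finset.univ.image rep,
    fun i => ⟨rep i, ⟨mem_image i, (rep_eq_iff _ _).1 (rep_rep i)⟩, ?_⟩, ?_⟩
  · rintro _ ⟨hl, hli⟩
    obtain ⟨j, -, rfl⟩ := Finset.mem_image.1 hl
    rw [← (rep_eq_iff _ _).2 hli, rep_rep]
  · rw [← Finset.prod_fiberwise_of_maps_to fun i _ => mem_image i]
    refine Finset.prod_congr rfl fun l hl => ?_
    obtain ⟨j, -, rfl⟩ := Finset.mem_image.1 hl
    rw [← prod_filter_iterate_eq hg hmaps (hper _)]
    refine Finset.prod_congr (Finset.filter_congr fun i _ => ?_) fun _ _ => rfl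
    rw [← rep_eq_iff, rep_rep, eq_comm]

end Function

section InvariantPolynomials

variable {R : Type*} [CommRing R] [IsDomain R] {σ : R →+* R}

theorem Polynomial.exists_apply_eq_of_map_prod_X_sub_C_eq {ι : Type*} [Fintype ι] {g : ι → R}
    (h : (∏ i, (X - C (g i))).map σ = ∏ i, (X - C (g i))) (i : ι) : ∃ j, σ (g i) = g j := by
  have hroot : IsRoot (∏ i, (X - C (g i))) (g i) :=
    (isRoot_prod _ _ _).2 ⟨i, Finset.mem_univ _, root_X_sub_C.2 rfl⟩
  obtain ⟨j, -, hj⟩ := (isRoot_prod _ _ _).1 (h ▸ hroot.map (f := σ))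
  exact ⟨j, (root_X_sub_C.1 hj).symm⟩

theorem Polynomial.minimalPeriod_le_natDegree_of_map_eq {P : R[X]} (hP : P ≠ 0)
    (hσ : P.map σ = P) {x : R} (hx : P.IsRoot x) : minimalPeriod σ x ≤ P.natDegree := by
  classical
  have hroots (n : ℕ) : P.IsRoot (σ^[n] x) := by
    induction n with
    | zero => exact hx
    | succ n ih => rw [iterate_succ_apply']; simpa only [hσ] using ih.map (f := σ)
  calc minimalPeriod σ x = ((Finset.range (minimalPeriod σ x)).image (σ^[·] x)).card := by
        rw [Finset.card_image_of_injOn (by simpa using iterate_injOn_Iio_minimalPeriod),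
          Finset.card_range]
    _ ≤ P.roots.toFinset.card := Finset.card_le_card fun y hy => by
        obtain ⟨n, -, rfl⟩ := Finset.mem_image.1 hy
        exact Multiset.mem_toFinset.2 ((mem_roots hP).2 (hroots n))
    _ ≤ P.natDegree := (Multiset.toFinset_card_le _).trans (card_roots' P)

end InvariantPolynomials

section OrbitPoly

variable (ξ : LaurentSeries ℂ ≃+* LaurentSeries ℂ) (f : LaurentSeries ℂ)

theorem monic_orbitPoly : (orbitPoly ξ f).Monic :=
  monic_prod_of_monic _ _ fun _ _ => monic_X_sub_C _

theorem natDegree_orbitPoly : (orbitPoly ξ f).natDegree = minimalPeriod ξ f := by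
  simp [orbitPoly, natDegree_prod_of_monic, monic_X_sub_C]

theorem splits_orbitPoly : (orbitPoly ξ f).Splits :=
  Splits.prod fun _ _ => Splits.X_sub_C _

theorem isRoot_orbitPoly_iff {x : LaurentSeries ℂ} :
    (orbitPoly ξ f).IsRoot x ↔ ∃ j < minimalPeriod ξ f, ξ^[j] f = x := by
  simp only [orbitPoly, isRoot_prod, Finset.mem_range, root_X_sub_C]

theorem map_orbitPoly :
    (orbitPoly ξ f).map (ξ : LaurentSeries ℂ →+* LaurentSeries ℂ) = orbitPoly ξ f := by
  simp only [orbitPoly, Polynomial.map_prod, Polynomial.map_sub, map_X, map_C,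
    RingEquiv.coe_toRingHom, ← iterate_succ_apply' ξ]
  rcases hr : minimalPeriod ξ f with _ | r
  · rfl
  · have hlast : ξ^[r + 1] f = f := hr ▸ iterate_minimalPeriod
    rw [Finset.prod_range_succ, Finset.prod_range_succ' _ r, hlast, iterate_zero_apply]

variable {ξ f} in
theorem degree_eq_zero_of_orbitPoly_eq_mul {P₁ P₂ : (LaurentSeries ℂ)[X]}
    (h : orbitPoly ξ f = P₁ * P₂) (h₁ : P₁.map (ξ : LaurentSeries ℂ →+* LaurentSeries ℂ) = P₁) :
    P₁.degree = 0 ∨ P₂.degree = 0 := by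
  refine or_iff_not_imp_left.2 fun hd => ?_
  have hO : orbitPoly ξ f ≠ 0 := (monic_orbitPoly ξ f).ne_zero
  obtain ⟨hP₁, hP₂⟩ := mul_ne_zero_iff.1 (h ▸ hO)
  obtain ⟨x, hx⟩ :=
    ((splits_orbitPoly ξ f).of_dvd hO (Dvd.intro _ h.symm)).exists_eval_eq_zero hd
  obtain ⟨j, hj, rfl⟩ :=
    (isRoot_orbitPoly_iff ξ f).1 (by rw [h, IsRoot, eval_mul, hx, zero_mul])
  have hle := minimalPeriod_le_natDegree_of_map_eq hP₁ h₁ hx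
  have hf : f ∈ periodicPts ξ := minimalPeriod_pos_iff_mem_periodicPts.1 (Nat.zero_lt_of_lt hj)
  rw [RingEquiv.coe_toRingHom, minimalPeriod_apply_iterate hf] at hle
  have hsum := natDegree_mul hP₁ hP₂
  rw [← h, natDegree_orbitPoly] at hsum
  rw [degree_eq_natDegree hP₂, show P₂.natDegree = 0 by omega]
  rfl

end OrbitPoly

section Twist

variable {s : ℕ} {ζ : ℂ} {ξ : LaurentSeries ℂ ≃+* LaurentSeries ℂ}

theorem coeff_iterate_of_coeff_apply
    (hξ : ∀ (f : LaurentSeries ℂ) (k : ℤ), (ξ f).coeff k = ζ ^ k * f.coeff k)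
    (n : ℕ) (f : LaurentSeries ℂ) (k : ℤ) : (ξ^[n] f).coeff k = (ζ ^ k) ^ n * f.coeff k := by
  induction n with
  | zero => simp
  | succ n ih => rw [iterate_succ_apply', hξ, ih, pow_succ, mul_assoc, mul_left_comm]

theorem isPeriodicPt_of_coeff_apply
    (hξ : ∀ (f : LaurentSeries ℂ) (k : ℤ), (ξ f).coeff k = ζ ^ k * f.coeff k)
    (hζ : ζ ^ s = 1) (f : LaurentSeries ℂ) : IsPeriodicPt ξ s f := by
  ext k
  have hζk : (ζ ^ k) ^ s = 1 := by
    rw [← zpow_natCast, ← zpow_mul, mul_comm, zpow_mul, zpow_natCast, hζ, one_zpow]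
  rw [coeff_iterate_of_coeff_apply hξ, hζk, one_mul]

theorem inSubfieldPow_iff_apply_eq
    (hξ : ∀ (f : LaurentSeries ℂ) (k : ℤ), (ξ f).coeff k = ζ ^ k * f.coeff k)
    (hζ : IsPrimitiveRoot ζ s) (f : LaurentSeries ℂ) : InSubfieldPow s f ↔ ξ f = f := by
  simp only [InSubfieldPow, HahnSeries.ext_iff, funext_iff, hξ, ← hζ.zpow_eq_one_iff_dvd]
  refine forall_congr' fun k => ?_
  by_cases hk : ζ ^ k = 1 <;> simp [hk, mul_left_eq_self₀]

theorem forall_inSubfieldPow_coeff_iff_map_eq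
    (hξ : ∀ (f : LaurentSeries ℂ) (k : ℤ), (ξ f).coeff k = ζ ^ k * f.coeff k)
    (hζ : IsPrimitiveRoot ζ s) (P : (LaurentSeries ℂ)[X]) :
    (∀ m, InSubfieldPow s (P.coeff m)) ↔
      P.map (ξ : LaurentSeries ℂ →+* LaurentSeries ℂ) = P := by
  simp only [inSubfieldPow_iff_apply_eq hξ hζ, Polynomial.ext_iff, coeff_map,
    RingEquiv.coe_toRingHom]

end Twist

theorem LaurentSeries.principalPart_unique {R : Type*} [Ring R] {a q q' : LaurentSeries R}
    (hq : ∀ k : ℤ, 0 ≤ k → q.coeff k = 0) (hq' : ∀ k : ℤ, 0 ≤ k → q'.coeff k = 0)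
    (ha : ∀ k : ℤ, k < 0 → (a - q).coeff k = 0) (ha' : ∀ k : ℤ, k < 0 → (a - q').coeff k = 0) :
    q = q' := by
  ext k
  rcases lt_or_ge k 0 with hk | hk
  · have h := ha k hk
    have h' := ha' k hk
    rw [HahnSeries.coeff_sub, sub_eq_zero] at h h'
    rw [← h, ← h']
  · rw [hq k hk, hq' k hk]

/-- **Irreducible factorization of the characteristic polynomial over `ℂ((t^s))`.**
With `ξ`, `pᵢ`, `G`, `gᵢ` as in the ramified HTL situation (`ξ` the automorphism of
`ℂ((t))` given by `t ↦ ζt`, `ζ = exp(2πi/s)`; `pᵢ ∈ t⁻¹ℂ[t⁻¹]` pairwise distinct; `G`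
with entries in `ℂ((t^s))`; `det(y Iₙ − G) = ∏ᵢ (y − gᵢ)` with `pr⁻(z·gᵢ) = pᵢ`,
`z = t^s`), the automorphism `ξ` permutes the set `{g₁, …, gₙ}`; each orbit has a
positive least period `r`, the associated polynomial `P_O(y) = ∏_{j<r} (y − ξ^j(g))`
has all coefficients in `ℂ((t^s))` and is irreducible in `ℂ((t^s))[y]`; and the
characteristic polynomial of `G` is the product of the `P_O` over a set of orbit
representatives. -/
theorem charpoly_irreducible_factorization
    (n s : ℕ) (hs : 0 < s)
    (ξ : LaurentSeries ℂ ≃+* LaurentSeries ℂ)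
    (hξ : ∀ f : LaurentSeries ℂ, ∀ k : ℤ,
      (ξ f).coeff k = Complex.exp (2 * (Real.pi : ℂ) * Complex.I / (s : ℂ)) ^ k * f.coeff k)
    (p : Fin n → LaurentSeries ℂ)
    (hp : ∀ i, ∀ k : ℤ, 0 ≤ k → (p i).coeff k = 0)
    (hpdist : Function.Injective p)
    (G : Matrix (Fin n) (Fin n) (LaurentSeries ℂ))
    (hG : ∀ i j, InSubfieldPow s (G i j))
    (g : Fin n → LaurentSeries ℂ)
    (hfact : G.charpoly = ∏ i, (Polynomial.X - Polynomial.C (g i)))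
    (hpr : ∀ i, ∀ k : ℤ, k < 0 →
      (HahnSeries.single (s : ℤ) (1 : ℂ) * g i - p i).coeff k = 0) :
    (∀ i, ∃ j, ξ (g i) = g j) ∧
    (∀ i, 0 < Function.minimalPeriod ⇑ξ (g i)) ∧
    (∀ i, ∀ m : ℕ, InSubfieldPow s ((orbitPoly ξ (g i)).coeff m)) ∧
    (∀ i, ∀ P₁ P₂ : Polynomial (LaurentSeries ℂ),
      (∀ m : ℕ, InSubfieldPow s (P₁.coeff m)) →
      (∀ m : ℕ, InSubfieldPow s (P₂.coeff m)) →
      orbitPoly ξ (g i) = P₁ * P₂ → P₁.degree = 0 ∨ P₂.degree = 0) ∧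
    ∃ Rep : Finset (Fin n),
      (∀ i : Fin n, ∃! l, l ∈ Rep ∧ ∃ m : ℕ, (⇑ξ)^[m] (g l) = g i) ∧
      G.charpoly = ∏ l ∈ Rep, orbitPoly ξ (g l) := by
  have hζ := Complex.isPrimitiveRoot_exp s hs.ne'
  have hfixed := forall_inSubfieldPow_coeff_iff_map_eq hξ hζ
  have hper (f : LaurentSeries ℂ) : f ∈ periodicPts ξ :=
    mk_mem_periodicPts hs (isPeriodicPt_of_coeff_apply hξ hζ.pow_eq_one f)
  have hGfixed : G.map ξ = G :=
    Matrix.ext fun i j => (inSubfieldPow_iff_apply_eq hξ hζ _).1 (hG i j)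
  have hperm : ∀ i, ∃ j, ξ (g i) = g j := by
    refine exists_apply_eq_of_map_prod_X_sub_C_eq
      (σ := (ξ : LaurentSeries ℂ →+* LaurentSeries ℂ)) ?_
    rw [← hfact, ← Matrix.charpoly_map]
    exact congrArg _ hGfixed
  have hg : Injective g := fun i j hij =>
    hpdist (LaurentSeries.principalPart_unique (hp i) (hp j) (hpr i) (hij ▸ hpr j))
  have hmaps : Set.MapsTo ξ (Set.range g) (Set.range g) := by
    rintro _ ⟨i, rfl⟩
    obtain ⟨j, hj⟩ := hperm i
    exact ⟨j, hj.symm⟩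
  obtain ⟨Rep, hRep, hprod⟩ :=
    exists_orbit_representatives_prod_eq hg hmaps (fun i => hper (g i)) fun y => X - C y
  exact ⟨hperm, fun i => minimalPeriod_pos_of_mem_periodicPts (hper _),
    fun i => (hfixed _).2 (map_orbitPoly ξ _),
    fun i P₁ P₂ h₁ _ h => degree_eq_zero_of_orbitPoly_eq_mul h ((hfixed P₁).1 h₁),
    Rep, hRep, hfact.trans hprod⟩
end
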